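/- arXiv:1410.0142 — 7 statements merged into one kernel-verified Lean document; each statement's English description precedes it below -/
import Mathlib

section
/- Let r,s,t,u be integers with ru−st=1 and let φ₁ : G(r,s,t,u) → ℤ/2ℤ be the (unique) group homomorphism sending the generators a ↦ 1, b ↦ 0, c ↦ 0 (it exists since each relator has even exponent sum in a). Then the kernel of φ₁ is isomorphic, as an abstract group, to G(ru+st, −2rs, 2tu, −(ru+st)). If instead ru−st=−1, the kernel of φ₁ is isomorphic to G(−(ru+st), 2rs, −2tu, ru+st). -/
/-- The relators of the presentation of the fundamental group of the sapphire
Sol 3-manifold determined by the matrix `[[r, s], [t, u]]`: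
`a·b·a⁻¹·b`, `c²·a^(−2r)·b^(−s)` and `c·a^(2t)·b^u·c⁻¹·a^(2t)·b^u`,
where `a, b, c` are the generators `of 0, of 1, of 2`. -/
def sapphireRels (r s t u : ℤ) : Set (FreeGroup (Fin 3)) :=
  { FreeGroup.of 0 * FreeGroup.of 1 * (FreeGroup.of 0)⁻¹ * FreeGroup.of 1,
    FreeGroup.of 2 ^ (2 : ℤ) * FreeGroup.of 0 ^ (-(2 * r)) * FreeGroup.of 1 ^ (-s),
    FreeGroup.of 2 * FreeGroup.of 0 ^ (2 * t) * FreeGroup.of 1 ^ u * (FreeGroup.of 2)⁻¹ *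
      FreeGroup.of 0 ^ (2 * t) * FreeGroup.of 1 ^ u }

/-- The fundamental group `G(r,s,t,u)` of the sapphire Sol 3-manifold. -/
abbrev SapphireGroup (r s t u : ℤ) := PresentedGroup (sapphireRels r s t u)

/-!
The kernel `K` of `φ` is generated by the lattice `Λ = ⟨a², b⟩ ≅ ℤ²`, by `c` and by `a c a⁻¹`.
Let `ε = det A = ±1`. In `K` the elements `a' = a c a⁻¹`, `b' = a^(2t) b^(-u)`, `c' = c`
satisfy the relations of `G(A')`, `A' = ε·[[ru+st, -2rs], [2tu, -(ru+st)]]`: `a'² = a^(2r) b^(-s)`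
and `b'` form a basis of `Λ`, and `A'` is the matrix of the action of `c` on `Λ` in that basis.
This gives `θ : G(A') → K`.

To invert `θ`, note that conjugation by `a` on `K` corresponds to an endomorphism `σ` of `G(A')`
with `σ² = conj m`, where `m = θ⁻¹(a²)` is fixed by `σ`. Such data define an extension `E` of
`ℤ/2` by `G(A')`, and `a ↦ τ`, `b ↦ θ⁻¹(b)`, `c ↦ c'` defines a homomorphism `G → E` inverse to
`x τ^e ↦ θ(x) a^e`. Under this isomorphism `φ` becomes the projection `E → ℤ/2`, whose kernel
is `G(A')`.
-/

structure TwistData (N : Type*) [Group N] where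
  σ : N →* N
  m : N
  σ_m : σ m = m
  σ_σ : ∀ x, σ (σ x) = m * x * m⁻¹

/-- `⟨x, e⟩` stands for `x τ^e`, where `τ x τ⁻¹ = σ x` and `τ² = m`. -/
structure TwistExt {N : Type*} [Group N] (d : TwistData N) where
  val : N
  odd : Bool

namespace TwistExt

variable {N : Type*} [Group N] {d : TwistData N}

instance : One (TwistExt d) := ⟨⟨1, false⟩⟩

instance : Mul (TwistExt d) :=
  ⟨fun p q => ⟨p.val * (if p.odd then d.σ q.val else q.val) *
    (if p.odd && q.odd then d.m else 1), p.odd ^^ q.odd⟩⟩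

instance : Inv (TwistExt d) :=
  ⟨fun p => if p.odd then ⟨d.m⁻¹ * (d.σ p.val)⁻¹, true⟩ else ⟨p.val⁻¹, false⟩⟩

lemma one_def : (1 : TwistExt d) = ⟨1, false⟩ := rfl

lemma mul_def (p q : TwistExt d) : p * q =
    ⟨p.val * (if p.odd then d.σ q.val else q.val) * (if p.odd && q.odd then d.m else 1),
      p.odd ^^ q.odd⟩ := rfl

instance : Group (TwistExt d) := Group.ofLeftAxioms
  (fun ⟨x, e⟩ ⟨y, f⟩ ⟨z, g⟩ => by
    cases e <;> cases f <;> cases g <;>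
      simp only [mul_def, Bool.false_eq_true, ↓reduceIte, Bool.and_self, Bool.and_true,
        Bool.and_false, mul_one, bne_self_eq_false, Bool.bne_true, Bool.bne_false, Bool.not_false,
        map_mul, d.σ_σ, d.σ_m, mk.injEq, and_true] <;>
      group)
  (fun ⟨x, e⟩ => by cases e <;> simp [mul_def, one_def])
  (fun ⟨x, e⟩ => by cases e <;> simp [mul_def, Inv.inv, one_def])

variable (d) in
def ι : N →* TwistExt d where
  toFun x := ⟨x, false⟩
  map_one' := rfl
  map_mul' _ _ := by simp [mul_def]

variable (d) in
def τ : TwistExt d := ⟨1, true⟩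

lemma ι_injective : Function.Injective (ι d) := fun _ _ h => congrArg val h

lemma mk_true (x : N) : (⟨x, true⟩ : TwistExt d) = ι d x * τ d := by
  simp [mul_def, ι, τ]

lemma τ_mul_τ : τ d * τ d = ι d d.m := by
  simp [mul_def, ι, τ]

lemma τ_zpow_two_mul (n : ℤ) : τ d ^ (2 * n) = ι d (d.m ^ n) := by
  rw [zpow_mul, zpow_two, τ_mul_τ, map_zpow]

lemma τ_mul_ι_mul_τ_inv (x : N) : τ d * ι d x * (τ d)⁻¹ = ι d (d.σ x) := by
  rw [mul_inv_eq_iff_eq_mul]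
  simp [mul_def, ι, τ]

lemma hom_ext {G : Type*} [Group G] {f g : TwistExt d →* G} (hι : f.comp (ι d) = g.comp (ι d))
    (hτ : f (τ d) = g (τ d)) : f = g := by
  ext ⟨x, e⟩
  cases e
  · exact DFunLike.congr_fun hι x
  · rw [mk_true, map_mul, map_mul, hτ]
    exact congrArg (· * g (τ d)) (DFunLike.congr_fun hι x)

section lift

variable {G : Type*} [Group G] (f : N →* G) (g : G) (hσ : ∀ x, f (d.σ x) = g * f x * g⁻¹)
  (hm : f d.m = g * g)

def lift : TwistExt d →* G where
  toFun p := f p.val * if p.odd then g else 1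
  map_one' := by simp [one_def]
  map_mul' := fun ⟨x, e⟩ ⟨y, e'⟩ => by
    cases e <;> cases e' <;>
      simp only [mul_def, Bool.false_eq_true, ↓reduceIte, Bool.and_self, Bool.and_true,
        Bool.and_false, mul_one, bne_self_eq_false, Bool.bne_true, Bool.bne_false, Bool.not_false,
        map_mul, hσ, hm] <;>
      group

lemma lift_ι (x : N) : lift f g hσ hm (ι d x) = f x := by simp [lift, ι]

lemma lift_τ : lift f g hσ hm (τ d) = g := by simp [lift, τ]

end lift

variable (d) in
def π : TwistExt d →* Multiplicative (ZMod 2) :=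
  lift 1 (Multiplicative.ofAdd 1) (by simp) (by simp only [MonoidHom.one_apply]; decide)

lemma π_ι (x : N) : π d (ι d x) = 1 := lift_ι ..

lemma π_τ : π d (τ d) = Multiplicative.ofAdd 1 := lift_τ ..

lemma ker_π : (π d).ker = (ι d).range := by
  ext ⟨x, e⟩
  cases e <;> simp [MonoidHom.mem_ker, π, lift, ι]

theorem nonempty_ker_mulEquiv {G : Type*} [Group G] (e : G ≃* TwistExt d)
    {φ : G →* Multiplicative (ZMod 2)} (hφ : (π d).comp e.toMonoidHom = φ) :
    Nonempty (φ.ker ≃* N) := by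
  have hker : φ.ker = (ι d).range.map e.symm.toMonoidHom := by
    rw [← hφ, ← MonoidHom.comap_ker, ker_π, Subgroup.map_equiv_eq_comap_symm',
      MulEquiv.symm_symm]
  exact ⟨(MulEquiv.subgroupCongr hker).trans
    ((e.symm.subgroupMap _).symm.trans (MonoidHom.ofInjective ι_injective).symm)⟩

end TwistExt

lemma commute_zpow_two_mul_zpow_of_mul_mul_inv_eq_inv {G : Type*} [Group G] {x y : G}
    (h : x * y * x⁻¹ = y⁻¹) (m n : ℤ) : Commute (x ^ (2 * m)) (y ^ n) := by
  have h' : x * y⁻¹ * x⁻¹ = y := by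
    calc x * y⁻¹ * x⁻¹ = (x * y * x⁻¹)⁻¹ := by group
      _ = y := by rw [h, inv_inv]
  have hsq : Commute (x * x) y := by
    calc x * x * y = x * (x * y * x⁻¹) * x⁻¹ * (x * x) := by group
      _ = y * (x * x) := by rw [h, h']
  rw [zpow_mul, zpow_two]
  exact hsq.zpow_zpow m n

namespace SapphireGroup

variable {r s t u ε : ℤ}

def a : SapphireGroup r s t u := PresentedGroup.of 0
def b : SapphireGroup r s t u := PresentedGroup.of 1
def c : SapphireGroup r s t u := PresentedGroup.of 2

section lift

variable {G : Type*} [Group G] (x y z : G) (h₁ : x * y * x⁻¹ = y⁻¹)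
  (h₂ : z ^ (2 : ℤ) = x ^ (2 * r) * y ^ s)
  (h₃ : z * (x ^ (2 * t) * y ^ u) * z⁻¹ = (x ^ (2 * t) * y ^ u)⁻¹)

def lift : SapphireGroup r s t u →* G :=
  PresentedGroup.toGroup (f := ![x, y, z]) <| by
    rintro w (rfl | rfl | rfl)
    · simpa [← mul_assoc] using mul_eq_one_iff_eq_inv.mpr h₁
    · simp only [map_mul, map_zpow, map_inv, FreeGroup.lift_apply_of, Matrix.cons_val, h₂,
        zpow_neg, (commute_zpow_two_mul_zpow_of_mul_mul_inv_eq_inv h₁ r s).eq]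
      group
    · simpa [← mul_assoc] using mul_eq_one_iff_eq_inv.mpr h₃

@[simp] lemma lift_a : lift x y z h₁ h₂ h₃ a = x := PresentedGroup.toGroup.of _
@[simp] lemma lift_b : lift x y z h₁ h₂ h₃ b = y := PresentedGroup.toGroup.of _
@[simp] lemma lift_c : lift x y z h₁ h₂ h₃ c = z := PresentedGroup.toGroup.of _

end lift

lemma hom_ext {G : Type*} [Group G] {f g : SapphireGroup r s t u →* G} (ha : f a = g a)
    (hb : f b = g b) (hc : f c = g c) : f = g :=
  PresentedGroup.ext fun i => by fin_cases i <;> assumption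

lemma a_mul_b_mul_a_inv : (a : SapphireGroup r s t u) * b * a⁻¹ = b⁻¹ :=
  mul_eq_one_iff_eq_inv.mp (PresentedGroup.one_of_mem (Set.mem_insert _ _))

/-- Coordinates on the lattice `⟨a², b⟩ ≅ ℤ²`. -/
def lat (x y : ℤ) : SapphireGroup r s t u := a ^ (2 * x) * b ^ y

lemma commute_a_zpow_two_mul_b_zpow (x y : ℤ) :
    Commute ((a : SapphireGroup r s t u) ^ (2 * x)) (b ^ y) :=
  commute_zpow_two_mul_zpow_of_mul_mul_inv_eq_inv a_mul_b_mul_a_inv x y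

lemma c_zpow_two : (c : SapphireGroup r s t u) ^ (2 : ℤ) = lat r s := by
  have h : (c : SapphireGroup r s t u) ^ (2 : ℤ) * a ^ (-(2 * r)) * b ^ (-s) = 1 :=
    PresentedGroup.one_of_mem (Set.mem_insert_of_mem _ (Set.mem_insert _ _))
  rw [mul_assoc, mul_eq_one_iff_eq_inv] at h
  rw [h, mul_inv_rev, ← zpow_neg, ← zpow_neg, neg_neg, neg_neg, lat,
    (commute_a_zpow_two_mul_b_zpow r s).eq]

lemma c_mul_lat_mul_c_inv : (c : SapphireGroup r s t u) * lat t u * c⁻¹ = (lat t u)⁻¹ := by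
  have h : (c : SapphireGroup r s t u) * a ^ (2 * t) * b ^ u * c⁻¹ * a ^ (2 * t) * b ^ u = 1 :=
    PresentedGroup.one_of_mem (Set.mem_insert_of_mem _ (Set.mem_insert_of_mem _ rfl))
  rw [← mul_eq_one_iff_eq_inv]
  simpa only [lat, mul_assoc] using h

lemma lat_mul (x y x' y' : ℤ) :
    (lat x y : SapphireGroup r s t u) * lat x' y' = lat (x + x') (y + y') := by
  simp only [lat, zpow_add, mul_add]
  rw [mul_assoc, ← mul_assoc (b ^ y), ← (commute_a_zpow_two_mul_b_zpow x' y).eq]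
  group

lemma lat_zero_zero : (lat 0 0 : SapphireGroup r s t u) = 1 := by simp [lat]

lemma lat_inv (x y : ℤ) : (lat x y : SapphireGroup r s t u)⁻¹ = lat (-x) (-y) := by
  rw [inv_eq_iff_mul_eq_one, lat_mul, add_neg_cancel, add_neg_cancel, lat_zero_zero]

lemma lat_zpow (x y n : ℤ) : (lat x y : SapphireGroup r s t u) ^ n = lat (n * x) (n * y) := by
  rw [lat, (commute_a_zpow_two_mul_b_zpow x y).mul_zpow, ← zpow_mul, ← zpow_mul, lat]
  ring_nf

lemma lat_commute (p q x y : ℤ) : Commute (lat p q : SapphireGroup r s t u) (lat x y) := by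
  rw [Commute, SemiconjBy, lat_mul, lat_mul, add_comm p, add_comm q]

lemma lat_mul_mul_inv (p q x y : ℤ) :
    (lat p q : SapphireGroup r s t u) * lat x y * (lat p q)⁻¹ = lat x y := by
  rw [(lat_commute p q x y).eq, mul_inv_cancel_right]

lemma inv_lat_mul_mul (p q x y : ℤ) :
    (lat p q : SapphireGroup r s t u)⁻¹ * lat x y * lat p q = lat x y := by
  rw [(lat_commute p q x y).inv_left.eq, inv_mul_cancel_right]

lemma lat_one_zero : (lat 1 0 : SapphireGroup r s t u) = a * a := by
  rw [lat, mul_one, zpow_zero, mul_one, zpow_two]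

lemma lat_zero_one : (lat 0 1 : SapphireGroup r s t u) = b := by simp [lat]

lemma a_mul_lat_mul_a_inv (x y : ℤ) :
    (a : SapphireGroup r s t u) * lat x y * a⁻¹ = lat x (-y) := by
  have hb : (a : SapphireGroup r s t u) * b ^ y * a⁻¹ = b ^ (-y) := by
    rw [← conj_zpow, a_mul_b_mul_a_inv, inv_zpow, zpow_neg]
  simp only [lat]
  rw [← hb, ← mul_assoc, ((Commute.refl a).zpow_right (2 * x)).eq]
  group

lemma a_inv_mul_lat_mul_a (x y : ℤ) :
    (a : SapphireGroup r s t u)⁻¹ * lat x y * a = lat x (-y) := by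
  calc a⁻¹ * lat x y * a = a⁻¹ * (a * lat x (-y) * a⁻¹) * a := by
        rw [a_mul_lat_mul_a_inv, neg_neg]
    _ = lat x (-y) := by group

lemma c_zpow_two_mul (n : ℤ) : (c : SapphireGroup r s t u) ^ (2 * n) = lat (n * r) (n * s) := by
  rw [zpow_mul, c_zpow_two, lat_zpow]

/-- `G(A')` for `A' = ε·[[ru+st, -2rs], [2tu, -(ru+st)]]`; with `ε * det A = 1` this treats both
signs of `det A` at once. -/
abbrev coverGroup (r s t u ε : ℤ) : Type :=
  SapphireGroup (ε * (r * u + s * t)) (-(2 * ε * r * s)) (2 * ε * t * u)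
    (-(ε * (r * u + s * t)))

lemma a_mul_c_mul_a_inv_zpow_two_mul (n : ℤ) :
    ((a : SapphireGroup r s t u) * c * a⁻¹) ^ (2 * n) = lat (n * r) (-(n * s)) := by
  rw [conj_zpow, c_zpow_two_mul, a_mul_lat_mul_a_inv]

section cover

variable (hε : ε * (r * u - s * t) = 1)

def coverHom : coverGroup r s t u ε →* SapphireGroup r s t u :=
  lift (a * c * a⁻¹) (lat t (-u)) c
    (calc a * c * a⁻¹ * lat t (-u) * (a * c * a⁻¹)⁻¹
          = a * (c * (a⁻¹ * lat t (-u) * a) * c⁻¹) * a⁻¹ := by group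
        _ = (lat t (-u))⁻¹ := by
          rw [a_inv_mul_lat_mul_a, neg_neg, c_mul_lat_mul_c_inv, lat_inv, a_mul_lat_mul_a_inv,
            lat_inv, neg_neg])
    (by
      rw [a_mul_c_mul_a_inv_zpow_two_mul, lat_zpow, lat_mul, c_zpow_two]
      exact congrArg₂ _ (by linear_combination (-r) * hε) (by linear_combination (-s) * hε))
    (by
      have h : ((a : SapphireGroup r s t u) * c * a⁻¹) ^ (2 * (2 * ε * t * u)) *
          lat t (-u) ^ (-(ε * (r * u + s * t))) = lat t u := by
        rw [a_mul_c_mul_a_inv_zpow_two_mul, lat_zpow, lat_mul]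
        exact congrArg₂ _ (by linear_combination t * hε) (by linear_combination u * hε)
      rw [h, c_mul_lat_mul_c_inv])

@[simp] lemma coverHom_a : coverHom hε a = a * c * a⁻¹ := lift_a ..
@[simp] lemma coverHom_b : coverHom hε b = lat t (-u) := lift_b ..
@[simp] lemma coverHom_c : coverHom hε c = c := lift_c ..

lemma coverHom_lat (x y : ℤ) :
    coverHom hε (lat x y) = lat (x * r + y * t) (-(x * s + y * u)) := by
  rw [lat, map_mul, map_zpow, map_zpow, coverHom_a, coverHom_b, a_mul_c_mul_a_inv_zpow_two_mul,
    lat_zpow, lat_mul]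
  exact congrArg₂ _ (by ring) (by ring)

/-- Conjugation by `a`, read in `G(A')` through `coverHom`; `lat (ε * u) (-(ε * s))` is the
preimage of `a²`. -/
def coverTwist : coverGroup r s t u ε →* coverGroup r s t u ε :=
  lift (lat (ε * u) (-(ε * s)) * c * (lat (ε * u) (-(ε * s)))⁻¹)
    (lat (2 * ε * t * u) (-(ε * (r * u + s * t)))) a
    (calc _ = lat (ε * u) (-(ε * s)) * (c * ((lat (ε * u) (-(ε * s)))⁻¹ *
            lat (2 * ε * t * u) (-(ε * (r * u + s * t))) * lat (ε * u) (-(ε * s))) * c⁻¹) *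
            (lat (ε * u) (-(ε * s)))⁻¹ := by group
        _ = _ := by rw [inv_lat_mul_mul, c_mul_lat_mul_c_inv, lat_inv, lat_mul_mul_inv])
    (by
      rw [conj_zpow, c_zpow_two_mul, lat_mul_mul_inv, lat_zpow, lat_mul, zpow_two, ← lat_one_zero]
      exact congrArg₂ _ (by linear_combination (-(1 + ε * (r * u - s * t))) * hε) (by ring))
    (by
      have h : (lat (ε * u) (-(ε * s)) * c * (lat (ε * u) (-(ε * s)))⁻¹) ^
          (2 * (2 * ε * t * u)) *
          lat (2 * ε * t * u) (-(ε * (r * u + s * t))) ^ (-(ε * (r * u + s * t))) =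
          (b : coverGroup r s t u ε) := by
        rw [conj_zpow, c_zpow_two_mul, lat_mul_mul_inv, lat_zpow, lat_mul, ← lat_zero_one]
        exact congrArg₂ _ (by ring) (by linear_combination (1 + ε * (r * u - s * t)) * hε)
      rw [h, a_mul_b_mul_a_inv])

@[simp] lemma coverTwist_a :
    coverTwist hε a = lat (ε * u) (-(ε * s)) * c * (lat (ε * u) (-(ε * s)))⁻¹ := lift_a ..
@[simp] lemma coverTwist_b : coverTwist hε b = lat (2 * ε * t * u) (-(ε * (r * u + s * t))) :=
  lift_b ..
@[simp] lemma coverTwist_c : coverTwist hε c = a := lift_c ..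

lemma coverTwist_lat (x y : ℤ) :
    coverTwist hε (lat x y) = lat (x * (ε * (r * u + s * t)) + y * (2 * ε * t * u))
      (x * (-(2 * ε * r * s)) + y * (-(ε * (r * u + s * t)))) := by
  rw [lat, map_mul, map_zpow, map_zpow, coverTwist_a, coverTwist_b, conj_zpow, c_zpow_two_mul,
    lat_mul_mul_inv, lat_zpow, lat_mul]

lemma coverTwist_fixed : coverTwist hε (lat (ε * u) (-(ε * s))) = lat (ε * u) (-(ε * s)) := by
  rw [coverTwist_lat]
  exact congrArg₂ _ (by linear_combination ε * u * hε) (by linear_combination (-ε * s) * hε)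

lemma coverTwist_coverTwist (x : coverGroup r s t u ε) :
    coverTwist hε (coverTwist hε x) =
      lat (ε * u) (-(ε * s)) * x * (lat (ε * u) (-(ε * s)))⁻¹ := by
  suffices h : (coverTwist hε).comp (coverTwist hε) =
      (MulAut.conj (lat (ε * u) (-(ε * s)) : coverGroup r s t u ε)).toMonoidHom from
    DFunLike.congr_fun h x
  refine hom_ext ?_ ?_ ?_ <;> simp only [MonoidHom.comp_apply, MulEquiv.coe_toMonoidHom,
    MulAut.conj_apply]
  · rw [coverTwist_a, map_mul, map_mul, map_inv, coverTwist_c, coverTwist_fixed]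
  · rw [coverTwist_b, coverTwist_lat, ← lat_zero_one, lat_mul_mul_inv]
    exact congrArg₂ _ (by ring) (by linear_combination (1 + ε * (r * u - s * t)) * hε)
  · rw [coverTwist_c, coverTwist_a]

def coverTwistData : TwistData (coverGroup r s t u ε) where
  σ := coverTwist hε
  m := lat (ε * u) (-(ε * s))
  σ_m := coverTwist_fixed hε
  σ_σ := coverTwist_coverTwist hε

lemma coverTwistData_m : (coverTwistData hε).m = lat (ε * u) (-(ε * s)) := rfl

open TwistExt

def toTwistExt : SapphireGroup r s t u →* TwistExt (coverTwistData hε) :=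
  lift (τ _) (ι _ (lat (ε * t) (-(ε * r)))) (ι _ c)
    (by
      rw [τ_mul_ι_mul_τ_inv, ← map_inv, lat_inv]
      refine congrArg _ ((coverTwist_lat hε _ _).trans (congrArg₂ _ ?_ ?_))
      · linear_combination (-ε * t) * hε
      · linear_combination (ε * r) * hε)
    (by
      rw [τ_zpow_two_mul, ← map_zpow, ← map_zpow, ← map_mul, c_zpow_two, coverTwistData_m,
        lat_zpow, lat_zpow, lat_mul]
      exact congrArg _ (congrArg₂ _ (by ring) (by ring)))
    (by
      have h : (lat (ε * u) (-(ε * s)) ^ t * lat (ε * t) (-(ε * r)) ^ u :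
          coverGroup r s t u ε) = lat (2 * ε * t * u) (-(ε * (r * u + s * t))) := by
        rw [lat_zpow, lat_zpow, lat_mul]
        exact congrArg₂ _ (by ring) (by ring)
      rw [τ_zpow_two_mul, ← map_zpow, ← map_mul, coverTwistData_m, h, ← map_mul, ← map_inv,
        ← map_mul, c_mul_lat_mul_c_inv, map_inv])

@[simp] lemma toTwistExt_a : toTwistExt hε a = τ _ := lift_a ..
@[simp] lemma toTwistExt_b : toTwistExt hε b = ι _ (lat (ε * t) (-(ε * r))) := lift_b ..
@[simp] lemma toTwistExt_c : toTwistExt hε c = ι _ c := lift_c ..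

lemma toTwistExt_lat (x y : ℤ) :
    toTwistExt hε (lat x y) = ι _ (lat (ε * (x * u + y * t)) (-(ε * (x * s + y * r)))) := by
  rw [lat, map_mul, map_zpow, map_zpow, toTwistExt_a, toTwistExt_b, τ_zpow_two_mul, ← map_zpow,
    ← map_mul, coverTwistData_m, lat_zpow, lat_zpow, lat_mul]
  exact congrArg _ (congrArg₂ _ (by ring) (by ring))

lemma coverHom_lat_eq_a_mul_a : coverHom hε (lat (ε * u) (-(ε * s))) = a * a := by
  rw [coverHom_lat, ← lat_one_zero]
  exact congrArg₂ _ (by linear_combination hε) (by ring)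

lemma coverHom_coverTwist (x : coverGroup r s t u ε) :
    coverHom hε (coverTwist hε x) = a * coverHom hε x * a⁻¹ := by
  suffices h : (coverHom hε).comp (coverTwist hε) =
      (MulAut.conj (a : SapphireGroup r s t u)).toMonoidHom.comp (coverHom hε) from
    DFunLike.congr_fun h x
  refine hom_ext ?_ ?_ ?_ <;> simp only [MonoidHom.comp_apply, MulEquiv.coe_toMonoidHom,
    MulAut.conj_apply]
  · rw [coverTwist_a, map_mul, map_mul, map_inv, coverHom_lat_eq_a_mul_a, coverHom_c, coverHom_a]
    group
  · rw [coverTwist_b, coverHom_lat, coverHom_b, a_mul_lat_mul_a_inv]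
    exact congrArg₂ _ (by linear_combination t * hε) (by linear_combination u * hε)
  · rw [coverTwist_c, coverHom_c, coverHom_a]

def ofTwistExt : TwistExt (coverTwistData hε) →* SapphireGroup r s t u :=
  TwistExt.lift (coverHom hε) a (coverHom_coverTwist hε) (coverHom_lat_eq_a_mul_a hε)

lemma ofTwistExt_τ : ofTwistExt hε (τ _) = a := TwistExt.lift_τ ..

lemma ofTwistExt_ι (x : coverGroup r s t u ε) : ofTwistExt hε (ι _ x) = coverHom hε x :=
  TwistExt.lift_ι ..

lemma ofTwistExt_comp_toTwistExt : (ofTwistExt hε).comp (toTwistExt hε) = MonoidHom.id _ := by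
  refine hom_ext ?_ ?_ ?_ <;> simp only [MonoidHom.comp_apply, MonoidHom.id_apply, toTwistExt_a,
    toTwistExt_b, toTwistExt_c, ofTwistExt_τ, ofTwistExt_ι, coverHom_c]
  rw [coverHom_lat, ← lat_zero_one]
  exact congrArg₂ _ (by ring) (by linear_combination hε)

lemma toTwistExt_comp_ofTwistExt : (toTwistExt hε).comp (ofTwistExt hε) = MonoidHom.id _ := by
  refine TwistExt.hom_ext (hom_ext ?_ ?_ ?_) ?_ <;> simp only [MonoidHom.comp_apply,
    MonoidHom.id_apply, ofTwistExt_τ, ofTwistExt_ι, coverHom_a, coverHom_b, coverHom_c,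
    toTwistExt_a, toTwistExt_c, map_mul, map_inv]
  · rw [τ_mul_ι_mul_τ_inv]
    exact congrArg _ (coverTwist_c hε)
  · rw [toTwistExt_lat, ← lat_zero_one]
    exact congrArg _ (congrArg₂ _ (by ring) (by linear_combination hε))

def twistExtEquiv : SapphireGroup r s t u ≃* TwistExt (coverTwistData hε) :=
  MonoidHom.toMulEquiv (toTwistExt hε) (ofTwistExt hε) (ofTwistExt_comp_toTwistExt hε)
    (toTwistExt_comp_ofTwistExt hε)

end cover

theorem nonempty_ker_mulEquiv (hε : ε * (r * u - s * t) = 1)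
    (φ : SapphireGroup r s t u →* Multiplicative (ZMod 2))
    (ha : φ a = Multiplicative.ofAdd 1) (hb : φ b = Multiplicative.ofAdd 0)
    (hc : φ c = Multiplicative.ofAdd 0) {R S T U : ℤ} (hR : R = ε * (r * u + s * t))
    (hS : S = -(2 * ε * r * s)) (hT : T = 2 * ε * t * u) (hU : U = -(ε * (r * u + s * t))) :
    Nonempty (φ.ker ≃* SapphireGroup R S T U) := by
  subst hR hS hT hU
  refine TwistExt.nonempty_ker_mulEquiv (twistExtEquiv hε) (hom_ext ?_ ?_ ?_) <;>
    simp only [MonoidHom.comp_apply, MulEquiv.coe_toMonoidHom, twistExtEquiv,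
      MonoidHom.toMulEquiv_apply, toTwistExt_a, toTwistExt_b, toTwistExt_c, TwistExt.π_τ,
      TwistExt.π_ι, ha, hb, hc, ofAdd_zero]

end SapphireGroup

theorem stmt0 (r s t u : ℤ)
    (φ : SapphireGroup r s t u →* Multiplicative (ZMod 2))
    (ha : φ (PresentedGroup.of 0) = Multiplicative.ofAdd (1 : ZMod 2))
    (hb : φ (PresentedGroup.of 1) = Multiplicative.ofAdd (0 : ZMod 2))
    (hc : φ (PresentedGroup.of 2) = Multiplicative.ofAdd (0 : ZMod 2)) :
    (r * u - s * t = 1 →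
      Nonempty (φ.ker ≃*
        SapphireGroup (r * u + s * t) (-(2 * r * s)) (2 * t * u) (-(r * u + s * t)))) ∧
    (r * u - s * t = -1 →
      Nonempty (φ.ker ≃*
        SapphireGroup (-(r * u + s * t)) (2 * r * s) (-(2 * t * u)) (r * u + s * t))) :=
  ⟨fun h => SapphireGroup.nonempty_ker_mulEquiv (ε := 1) (by linear_combination h) φ ha hb hc
      (by ring) (by ring) (by ring) (by ring),
    fun h => SapphireGroup.nonempty_ker_mulEquiv (ε := -1) (by linear_combination -h) φ ha hb hc
      (by ring) (by ring) (by ring) (by ring)⟩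
end

section
/- Let r,s,t,u be integers with ru−st=±1 and let φ₅ : G(r,s,t,u) → ℤ/2ℤ be the (unique) group homomorphism sending the generators a ↦ 1, b ↦ 0, c ↦ 1. Then the kernel of φ₅ equals the subgroup of G(r,s,t,u) generated by the three elements a², b, and a⁻¹·c. -/
namespace Subgroup

variable {G : Type*} [Group G]

theorem inv_mul_mul_mem_closure {S : Set G} {a x : G}
    (hS : ∀ s ∈ S, a⁻¹ * s * a ∈ closure S) (hx : x ∈ closure S) :
    a⁻¹ * x * a ∈ closure S := by
  induction hx using closure_induction with
  | mem s hs => exact hS s hs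
  | one => simp
  | mul x y _ _ hx hy => simpa [mul_assoc] using mul_mem hx hy
  | inv x _ hx => simpa [mul_assoc] using inv_mem hx

theorem mem_or_inv_mul_mem_of_closure_eq_top {H : Subgroup G} {a : G} (ha : a ^ 2 ∈ H)
    (hconj : ∀ x ∈ H, a⁻¹ * x * a ∈ H) {S : Set G} (hS : closure S = ⊤)
    (hgen : ∀ s ∈ S, s ∈ H ∨ a⁻¹ * s ∈ H) (g : G) : g ∈ H ∨ a⁻¹ * g ∈ H := by
  have hg : g ∈ closure S := hS ▸ mem_top g
  induction hg using closure_induction with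
  | mem s hs => exact hgen s hs
  | one => exact .inl (one_mem H)
  | mul x y _ _ hx hy =>
    rcases hx with hx | hx <;> rcases hy with hy | hy
    · exact .inl (mul_mem hx hy)
    · exact .inr (by simpa [mul_assoc] using mul_mem (hconj x hx) hy)
    · exact .inr (by simpa [mul_assoc] using mul_mem hx hy)
    · refine .inl ?_
      convert mul_mem (mul_mem ha (hconj _ hx)) hy using 1
      group
  | inv x _ hx =>
    rcases hx with hx | hx
    · exact .inl (inv_mem hx)
    · refine .inr ?_
      convert mul_mem (hconj _ (inv_mem hx)) (inv_mem ha) using 1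
      group

end Subgroup

theorem MonoidHom.ker_eq_of_forall_mem_or_inv_mul_mem {G M : Type*} [Group G] [Group M]
    (φ : G →* M) {H : Subgroup G} (hH : H ≤ φ.ker) {a : G} (ha : φ a ≠ 1)
    (hcover : ∀ g, g ∈ H ∨ a⁻¹ * g ∈ H) : φ.ker = H := by
  refine le_antisymm (fun g hg ↦ (hcover g).resolve_right fun hag ↦ ha ?_) hH
  have h := hH hag
  rwa [mem_ker, map_mul, map_inv, (mem_ker).mp hg, mul_one, inv_eq_one] at h

namespace SapphireGroup

open PresentedGroup Subgroup

variable {r s t u : ℤ}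

def kerGenerators (r s t u : ℤ) : Set (SapphireGroup r s t u) :=
  {of 0 ^ 2, of 1, (of 0)⁻¹ * of 2}

theorem of_zero_inv_mul_of_one_mul_of_zero :
    ((of 0)⁻¹ * of 1 * of 0 : SapphireGroup r s t u) = (of 1)⁻¹ := by
  have h : (of 0 * of 1 * (of 0)⁻¹ * of 1 : SapphireGroup r s t u) = 1 :=
    one_of_mem (by simp [sapphireRels])
  rw [← mul_inv_eq_one, inv_inv]
  -- `a⁻¹bab` is the conjugate of the relator `aba⁻¹b` by `a⁻¹b`.
  convert congrArg (fun x ↦ ((of 0)⁻¹ * of 1) * x * ((of 0)⁻¹ * of 1)⁻¹) h using 1 <;> group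

theorem of_two_zpow_two :
    (of 2 ^ (2 : ℤ) : SapphireGroup r s t u) = of 1 ^ s * of 0 ^ (2 * r) := by
  have h : (of 2 ^ (2 : ℤ) * of 0 ^ (-(2 * r)) * of 1 ^ (-s) : SapphireGroup r s t u) = 1 :=
    one_of_mem (by simp [sapphireRels])
  rw [← mul_inv_eq_one]
  convert h using 1
  group

theorem inv_of_zero_mul_mul_of_zero_mem_closure_kerGenerators {x : SapphireGroup r s t u}
    (hx : x ∈ closure (kerGenerators r s t u)) :
    (of 0)⁻¹ * x * of 0 ∈ closure (kerGenerators r s t u) := by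
  set H := closure (kerGenerators r s t u)
  have ha : of 0 ^ 2 ∈ H := subset_closure (by simp [kerGenerators])
  have hb : of 1 ∈ H := subset_closure (by simp [kerGenerators])
  have hac : (of 0)⁻¹ * of 2 ∈ H := subset_closure (by simp [kerGenerators])
  refine inv_mul_mul_mem_closure ?_ hx
  rintro y (rfl | rfl | rfl)
  · convert ha using 1
    group
  · rw [of_zero_inv_mul_of_one_mul_of_zero]
    exact inv_mem hb
  · have hbs : ((of 0)⁻¹ * of 1 ^ s * of 0 : SapphireGroup r s t u) = (of 1 ^ s)⁻¹ := by
      have h := conj_zpow (a := ((of 0)⁻¹ : SapphireGroup r s t u)) (b := of 1) (i := s)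
      rwa [inv_inv, of_zero_inv_mul_of_one_mul_of_zero, inv_zpow, eq_comm] at h
    have hc2 : (of 0)⁻¹ * of 2 ^ (2 : ℤ) * of 0 ∈ H := by
      convert mul_mem (inv_mem (zpow_mem hb s)) (zpow_mem ha r) using 1
      rw [of_two_zpow_two, ← hbs]
      group
    -- `a⁻¹(a⁻¹c)a = a⁻² (a⁻¹c)⁻¹ (a⁻¹c²a)`
    convert mul_mem (mul_mem (inv_mem ha) (inv_mem hac)) hc2 using 1
    group

theorem mem_closure_kerGenerators_or (g : SapphireGroup r s t u) :
    g ∈ closure (kerGenerators r s t u) ∨ (of 0)⁻¹ * g ∈ closure (kerGenerators r s t u) := by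
  refine mem_or_inv_mul_mem_of_closure_eq_top (subset_closure (by simp [kerGenerators]))
    (fun _ ↦ inv_of_zero_mul_mul_of_zero_mem_closure_kerGenerators) (closure_range_of _) ?_ g
  rintro _ ⟨j, rfl⟩
  fin_cases j
  · exact .inr (by simp)
  · exact .inl (subset_closure (by simp [kerGenerators]))
  · exact .inr (subset_closure (by simp [kerGenerators]))

end SapphireGroup

theorem stmt5_general (r s t u : ℤ)
    (φ : SapphireGroup r s t u →* Multiplicative (ZMod 2))
    (ha : φ (PresentedGroup.of 0) = Multiplicative.ofAdd (1 : ZMod 2))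
    (hb : φ (PresentedGroup.of 1) = Multiplicative.ofAdd (0 : ZMod 2))
    (hc : φ (PresentedGroup.of 2) = Multiplicative.ofAdd (1 : ZMod 2)) :
    φ.ker = Subgroup.closure
      { (PresentedGroup.of 0 : SapphireGroup r s t u) ^ 2,
        PresentedGroup.of 1,
        (PresentedGroup.of 0)⁻¹ * PresentedGroup.of 2 } := by
  have hle : Subgroup.closure (SapphireGroup.kerGenerators r s t u) ≤ φ.ker := by
    rw [Subgroup.closure_le]
    rintro _ (rfl | rfl | rfl) <;>
      simp only [SetLike.mem_coe, MonoidHom.mem_ker, map_pow, map_mul, map_inv, ha, hb, hc] <;>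
      decide
  exact φ.ker_eq_of_forall_mem_or_inv_mul_mem hle (by rw [ha]; decide)
    SapphireGroup.mem_closure_kerGenerators_or

theorem stmt5 (r s t u : ℤ) (h : r * u - s * t = 1 ∨ r * u - s * t = -1)
    (φ : SapphireGroup r s t u →* Multiplicative (ZMod 2))
    (ha : φ (PresentedGroup.of 0) = Multiplicative.ofAdd (1 : ZMod 2))
    (hb : φ (PresentedGroup.of 1) = Multiplicative.ofAdd (0 : ZMod 2))
    (hc : φ (PresentedGroup.of 2) = Multiplicative.ofAdd (1 : ZMod 2)) :
    φ.ker = Subgroup.closure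
      { (PresentedGroup.of 0 : SapphireGroup r s t u) ^ 2,
        PresentedGroup.of 1,
        (PresentedGroup.of 0)⁻¹ * PresentedGroup.of 2 } :=
  stmt5_general r s t u φ ha hb hc
end

section
/- Let r,s,t,u be integers. For elements x,y,z ∈ ℤ/2ℤ, there exists a group homomorphism G(r,s,t,u) → ℤ/2ℤ sending the generators a ↦ x, b ↦ y, c ↦ z if and only if s·y = 0 in ℤ/2ℤ; moreover such a homomorphism is unique when it exists. Consequently, the number of group homomorphisms from G(r,s,t,u) to ℤ/2ℤ is 8 if s is even and 4 if s is odd (so the number of surjective such homomorphisms is 7 if s is even and 3 if s is odd). -/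
lemma key2 : ∀ (a : ZMod 2) (n : ℤ), (Multiplicative.ofAdd a) ^ n = Multiplicative.ofAdd ((n : ZMod 2) * a) := by
  intro a n
  rw [← ofAdd_toAdd ((Multiplicative.ofAdd a) ^ n)]
  congr 1
  simp [toAdd_zpow, zsmul_eq_mul]

lemma rels_one (r s t u : ℤ) (x y z : ZMod 2) (h : (s : ZMod 2) * y = 0) :
    ∀ w ∈ sapphireRels r s t u,
      FreeGroup.lift ![Multiplicative.ofAdd x, Multiplicative.ofAdd y, Multiplicative.ofAdd z] w = 1 := by
  rintro w (rfl | rfl | rfl) <;>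
    simp only [map_mul, map_inv, map_zpow, FreeGroup.lift_apply_of, Matrix.cons_val_zero,
      Matrix.cons_val_one, Matrix.head_cons, Matrix.cons_val_two, Matrix.tail_cons, key2] <;>
    rw [← ofAdd_zero] <;>
    simp only [← ofAdd_neg, ← ofAdd_add] <;>
    congr 1 <;> push_cast <;> ring_nf <;>
    simp [CharTwo.two_eq_zero, h, show (4:ZMod 2)=0 from by decide, mul_comm]

/-- The canonical hom for given generator values. -/
noncomputable def sapHom (r s t u : ℤ) (x y z : ZMod 2) (h : (s : ZMod 2) * y = 0) :
    SapphireGroup r s t u →* Multiplicative (ZMod 2) :=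
  PresentedGroup.toGroup (rels_one r s t u x y z h)

lemma sapHom_of (r s t u : ℤ) (x y z : ZMod 2) (h : (s : ZMod 2) * y = 0) :
    sapHom r s t u x y z h (PresentedGroup.of 0) = Multiplicative.ofAdd x ∧
    sapHom r s t u x y z h (PresentedGroup.of 1) = Multiplicative.ofAdd y ∧
    sapHom r s t u x y z h (PresentedGroup.of 2) = Multiplicative.ofAdd z := by
  refine ⟨?_, ?_, ?_⟩ <;> rw [sapHom, PresentedGroup.toGroup.of] <;> simp

lemma rel2_eq_one (r s t u : ℤ) :
    (PresentedGroup.of 2 : SapphireGroup r s t u) ^ (2:ℤ) *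
      (PresentedGroup.of 0) ^ (-(2*r)) * (PresentedGroup.of 1) ^ (-s) = 1 := by
  have hmem : FreeGroup.of 2 ^ (2 : ℤ) * FreeGroup.of 0 ^ (-(2 * r)) * FreeGroup.of 1 ^ (-s)
      ∈ sapphireRels r s t u := by simp [sapphireRels]
  have h1 : (QuotientGroup.mk' (Subgroup.normalClosure (sapphireRels r s t u)))
      (FreeGroup.of 2 ^ (2 : ℤ) * FreeGroup.of 0 ^ (-(2 * r)) * FreeGroup.of 1 ^ (-s)) = 1 :=
    (QuotientGroup.eq_one_iff _).2 (Subgroup.subset_normalClosure hmem)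
  rw [map_mul, map_mul, map_zpow, map_zpow, map_zpow] at h1
  exact h1

lemma forward (r s t u : ℤ) (φ : SapphireGroup r s t u →* Multiplicative (ZMod 2)) :
    (s : ZMod 2) * (φ (PresentedGroup.of 1)).toAdd = 0 := by
  have h1 := congrArg φ (rel2_eq_one r s t u)
  rw [map_mul, map_mul, map_zpow, map_zpow, map_zpow, map_one] at h1
  rw [← ofAdd_toAdd (φ (PresentedGroup.of 0)), ← ofAdd_toAdd (φ (PresentedGroup.of 1)),
    ← ofAdd_toAdd (φ (PresentedGroup.of 2)), key2, key2, key2, ← ofAdd_add, ← ofAdd_add,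
    ofAdd_eq_one] at h1
  revert h1
  push_cast
  intro h1
  rw [CharTwo.neg_eq, CharTwo.neg_eq] at h1
  simpa [CharTwo.two_eq_zero] using h1

lemma uniq (r s t u : ℤ) (φ ψ : SapphireGroup r s t u →* Multiplicative (ZMod 2))
    (h0 : φ (PresentedGroup.of 0) = ψ (PresentedGroup.of 0))
    (h1 : φ (PresentedGroup.of 1) = ψ (PresentedGroup.of 1))
    (h2 : φ (PresentedGroup.of 2) = ψ (PresentedGroup.of 2)) : φ = ψ := by
  apply PresentedGroup.ext
  intro i
  fin_cases i <;> assumption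

/-- The equivalence with triples satisfying the condition. -/
noncomputable def sapEquiv (r s t u : ℤ) :
    (SapphireGroup r s t u →* Multiplicative (ZMod 2)) ≃
      {p : ZMod 2 × ZMod 2 × ZMod 2 // (s : ZMod 2) * p.2.1 = 0} where
  toFun φ := ⟨((φ (PresentedGroup.of 0)).toAdd, (φ (PresentedGroup.of 1)).toAdd,
      (φ (PresentedGroup.of 2)).toAdd), forward r s t u φ⟩
  invFun p := sapHom r s t u p.1.1 p.1.2.1 p.1.2.2 p.2
  left_inv φ := by
    obtain ⟨ha, hb, hc⟩ := sapHom_of r s t u (φ (PresentedGroup.of 0)).toAdd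
      (φ (PresentedGroup.of 1)).toAdd (φ (PresentedGroup.of 2)).toAdd (forward r s t u φ)
    exact uniq r s t u _ φ (by simp [ha]) (by simp [hb]) (by simp [hc])
  right_inv p := by
    obtain ⟨ha, hb, hc⟩ := sapHom_of r s t u p.1.1 p.1.2.1 p.1.2.2 p.2
    ext <;> simp [ha, hb, hc]

lemma surj_iff (r s t u : ℤ) (φ : SapphireGroup r s t u →* Multiplicative (ZMod 2)) :
    Function.Surjective φ ↔ φ ≠ 1 := by
  constructor
  · rintro h rfl
    obtain ⟨g, hg⟩ := h (Multiplicative.ofAdd 1)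
    rw [MonoidHom.one_apply] at hg
    exact absurd hg (by decide)
  · intro h b
    have hex : ∃ g, φ g ≠ 1 := by
      by_contra hc
      push_neg at hc
      exact h (MonoidHom.ext fun g => hc g)
    obtain ⟨g, hg⟩ := hex
    have hall : ∀ c : Multiplicative (ZMod 2), c = 1 ∨ c = Multiplicative.ofAdd 1 := by decide
    rcases hall b with rfl | rfl
    · exact ⟨1, map_one φ⟩
    · rcases hall (φ g) with h' | h'
      · exact absurd h' hg
      · exact ⟨g, h'.symm ▸ rfl⟩

theorem stmt8 (r s t u : ℤ) :
    (∀ x y z : ZMod 2,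
      ((∃ φ : SapphireGroup r s t u →* Multiplicative (ZMod 2),
          φ (PresentedGroup.of 0) = Multiplicative.ofAdd x ∧
          φ (PresentedGroup.of 1) = Multiplicative.ofAdd y ∧
          φ (PresentedGroup.of 2) = Multiplicative.ofAdd z) ↔ (s : ZMod 2) * y = 0) ∧
      ∀ φ ψ : SapphireGroup r s t u →* Multiplicative (ZMod 2),
        φ (PresentedGroup.of 0) = Multiplicative.ofAdd x →
        φ (PresentedGroup.of 1) = Multiplicative.ofAdd y →
        φ (PresentedGroup.of 2) = Multiplicative.ofAdd z →
        ψ (PresentedGroup.of 0) = Multiplicative.ofAdd x →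
        ψ (PresentedGroup.of 1) = Multiplicative.ofAdd y →
        ψ (PresentedGroup.of 2) = Multiplicative.ofAdd z → φ = ψ) ∧
    Nat.card (SapphireGroup r s t u →* Multiplicative (ZMod 2)) =
      (if Even s then 8 else 4) ∧
    Nat.card {φ : SapphireGroup r s t u →* Multiplicative (ZMod 2) //
        Function.Surjective φ} = (if Even s then 7 else 3) := by
  classical
  have hsval : (if Even s then ((0:ZMod 2)) else 1) = (s : ZMod 2) := by
    by_cases hs : Even s <;> simp [hs]
    · exact ((ZMod.intCast_zmod_eq_zero_iff_dvd s 2).2 ((even_iff_two_dvd).1 hs)).symm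
    · have : ¬ (2 ∣ s) := fun hd => hs ((even_iff_two_dvd).2 hd)
      have h0 : (s : ZMod 2) ≠ 0 := fun hz => this ((ZMod.intCast_zmod_eq_zero_iff_dvd s 2).1 hz)
      rcases (show ∀ c : ZMod 2, c = 0 ∨ c = 1 by decide) (s : ZMod 2) with h | h
      · exact absurd h h0
      · exact h.symm
  have hcard : Nat.card (SapphireGroup r s t u →* Multiplicative (ZMod 2)) =
      (if Even s then 8 else 4) := by
    rw [Nat.card_congr (sapEquiv r s t u)]
    by_cases hs : Even s
    · have h0 : (s : ZMod 2) = 0 := by rw [← hsval]; simp [hs]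
      simp only [h0, hs, if_true]
      rw [Nat.card_eq_fintype_card]
      decide
    · have h0 : (s : ZMod 2) = 1 := by rw [← hsval]; simp [hs]
      simp only [h0, hs, if_false]
      rw [Nat.card_eq_fintype_card]
      decide
  haveI : Fintype (SapphireGroup r s t u →* Multiplicative (ZMod 2)) :=
    Fintype.ofEquiv _ (sapEquiv r s t u).symm
  refine ⟨fun x y z => ⟨⟨?_, ?_⟩, fun φ ψ h1 h2 h3 h4 h5 h6 =>
      uniq r s t u φ ψ (h1.trans h4.symm) (h2.trans h5.symm) (h3.trans h6.symm)⟩, hcard, ?_⟩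
  · rintro ⟨φ, h1, h2, h3⟩
    have := forward r s t u φ
    rwa [h2, toAdd_ofAdd] at this
  · intro h
    exact ⟨sapHom r s t u x y z h, sapHom_of r s t u x y z h⟩
  · have hsetcongr : {φ : SapphireGroup r s t u →* Multiplicative (ZMod 2) //
        Function.Surjective φ} ≃ {φ : SapphireGroup r s t u →* Multiplicative (ZMod 2) // φ ≠ 1} :=
      Equiv.subtypeEquivRight fun φ => surj_iff r s t u φ
    rw [Nat.card_congr hsetcongr, Nat.card_eq_fintype_card, Fintype.card_subtype_compl,
      Fintype.card_subtype_eq]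
    rw [Nat.card_eq_fintype_card] at hcard
    rw [hcard]
    by_cases hs : Even s <;> simp [hs]
end

section
/- Let r,s,t,u be integers with ru−st=±1 and s even, and let φ₂, φ₄, φ₆, φ₇ : G(r,s,t,u) → ℤ/2ℤ be the homomorphisms determined on the generators (a,b,c) by (0,1,0), (1,1,0), (0,1,1), (1,1,1) respectively. Then these four epimorphisms are pairwise equivalent under automorphisms: for every pair i,j ∈ {2,4,6,7} there exists an automorphism θ of G(r,s,t,u) such that φ_j ∘ θ = φ_i. -/
namespace Sap
variable {r s t u : ℤ}

def A : SapphireGroup r s t u := PresentedGroup.of 0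
def B : SapphireGroup r s t u := PresentedGroup.of 1
def C : SapphireGroup r s t u := PresentedGroup.of 2

local notation "a" => (A : SapphireGroup r s t u)
local notation "b" => (B : SapphireGroup r s t u)
local notation "c" => (C : SapphireGroup r s t u)

lemma mk_rel {x : FreeGroup (Fin 3)} (hx : x ∈ sapphireRels r s t u) :
    PresentedGroup.mk (sapphireRels r s t u) x = 1 :=
  (QuotientGroup.eq_one_iff x).2 (Subgroup.subset_normalClosure hx)

lemma rel1 : a * b * a⁻¹ * b = 1 := by
  have := mk_rel (r := r) (s := s) (t := t) (u := u) (Set.mem_insert _ _)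
  simpa [A, B, PresentedGroup.of] using this

lemma rel2 : c ^ (2:ℤ) * a ^ (-(2*r)) * b ^ (-s) = 1 := by
  have := mk_rel (r := r) (s := s) (t := t) (u := u)
    (Set.mem_insert_of_mem _ (Set.mem_insert _ _))
  simpa [A, B, C, PresentedGroup.of] using this

lemma rel3 : c * a ^ (2*t) * b ^ u * c⁻¹ * a ^ (2*t) * b ^ u = 1 := by
  have := mk_rel (r := r) (s := s) (t := t) (u := u)
    (Set.mem_insert_of_mem _ (Set.mem_insert_of_mem _ rfl))
  simpa [A, B, C, PresentedGroup.of] using this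

lemma hba : b * a = a * b⁻¹ := by
  have h2 : a⁻¹ * b * a * b = 1 := by
    have : a⁻¹ * b * a * b = (a * b)⁻¹ * (a * b * a⁻¹ * b) * (a * b) := by group
    rw [this, rel1]; group
  calc b * a = a * (a⁻¹ * b * a * b) * b⁻¹ := by group
    _ = a * b⁻¹ := by rw [h2]; group

lemma hb'a : b⁻¹ * a = a * b := by
  have h2 : a⁻¹ * b⁻¹ * a * b⁻¹ = 1 := by
    have : a⁻¹ * b⁻¹ * a * b⁻¹ = a⁻¹ * (a * b * a⁻¹ * b)⁻¹ * a := by group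
    rw [this, rel1]; group
  calc b⁻¹ * a = a * (a⁻¹ * b⁻¹ * a * b⁻¹) * b := by group
    _ = a * b := by rw [h2]; group

lemma hsq : (a * b) * (a * b) = a * a := by
  calc (a * b) * (a * b) = a * (b * a) * b := by group
    _ = a * (a * b⁻¹) * b := by rw [hba]
    _ = a * a := by group

lemma hsq' : (a * b⁻¹) * (a * b⁻¹) = a * a := by
  calc (a * b⁻¹) * (a * b⁻¹) = a * (b⁻¹ * a) * b⁻¹ := by group
    _ = a * (a * b) * b⁻¹ := by rw [hb'a]
    _ = a * a := by group

lemma zpow_two_mul_eq {G : Type*} [Group G] {x y : G} (h : x * x = y * y) (k : ℤ) :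
    x ^ (2 * k) = y ^ (2 * k) := by
  rw [zpow_mul, zpow_mul, zpow_two, zpow_two, h]

lemma hComm : Commute b (a * a) := by
  unfold Commute SemiconjBy
  calc b * (a * a) = (b * a) * a := by group
    _ = (a * b⁻¹) * a := by rw [hba]
    _ = a * (b⁻¹ * a) := by group
    _ = a * (a * b) := by rw [hb'a]
    _ = a * a * b := by group

-- conjugation by c on w := a^{2t} b^u
lemma hc4 : c * (a ^ (2*t) * b ^ u) * c⁻¹ = (a ^ (2*t) * b ^ u)⁻¹ := by
  have h3 := rel3 (r := r) (s := s) (t := t) (u := u)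
  calc c * (a ^ (2*t) * b ^ u) * c⁻¹
      = (c * a ^ (2*t) * b ^ u * c⁻¹ * a ^ (2*t) * b ^ u) * (a ^ (2*t) * b ^ u)⁻¹ := by group
    _ = (a ^ (2*t) * b ^ u)⁻¹ := by rw [h3]; group

lemma hcw : c * (a ^ (2*t) * b ^ u) = (a ^ (2*t) * b ^ u)⁻¹ * c := by
  calc c * (a ^ (2*t) * b ^ u) = (c * (a ^ (2*t) * b ^ u) * c⁻¹) * c := by group
    _ = (a ^ (2*t) * b ^ u)⁻¹ * c := by rw [hc4]

lemma hc4' : c * (a ^ (2*t) * b ^ u)⁻¹ * c⁻¹ = a ^ (2*t) * b ^ u := by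
  have h := congrArg (·⁻¹) (hc4 (r := r) (s := s) (t := t) (u := u))
  simpa [mul_assoc] using h

lemma hcw' : c * (a ^ (2*t) * b ^ u)⁻¹ = (a ^ (2*t) * b ^ u) * c := by
  calc c * (a ^ (2*t) * b ^ u)⁻¹ = (c * (a ^ (2*t) * b ^ u)⁻¹ * c⁻¹) * c := by group
    _ = (a ^ (2*t) * b ^ u) * c := by rw [hc4']


def gA : Fin 3 → SapphireGroup r s t u
  | 0 => A * B
  | 1 => B
  | 2 => C

def gA' : Fin 3 → SapphireGroup r s t u
  | 0 => A * B⁻¹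
  | 1 => B
  | 2 => C

def gC : Fin 3 → SapphireGroup r s t u
  | 0 => A
  | 1 => B
  | 2 => C * (A ^ (2*t) * B ^ u)

def gC' : Fin 3 → SapphireGroup r s t u
  | 0 => A
  | 1 => B
  | 2 => C * (A ^ (2*t) * B ^ u)⁻¹

lemma memCases {x : FreeGroup (Fin 3)} (hx : x ∈ sapphireRels r s t u) :
    x = FreeGroup.of 0 * FreeGroup.of 1 * (FreeGroup.of 0)⁻¹ * FreeGroup.of 1 ∨
    x = FreeGroup.of 2 ^ (2 : ℤ) * FreeGroup.of 0 ^ (-(2 * r)) * FreeGroup.of 1 ^ (-s) ∨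
    x = FreeGroup.of 2 * FreeGroup.of 0 ^ (2 * t) * FreeGroup.of 1 ^ u * (FreeGroup.of 2)⁻¹ *
      FreeGroup.of 0 ^ (2 * t) * FreeGroup.of 1 ^ u := by
  simpa [sapphireRels] using hx

lemma gA_cond : ∀ x ∈ sapphireRels r s t u, FreeGroup.lift (gA (r := r) (s := s) (t := t) (u := u)) x = 1 := by
  intro x hx
  rcases memCases hx with rfl | rfl | rfl <;>
    simp only [map_mul, map_inv, map_zpow, FreeGroup.lift_apply_of]
  · show (A * B) * B * (A * B)⁻¹ * B = 1
    have : (A * B) * B * (A * B)⁻¹ * B = a * b * a⁻¹ * b := by group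
    rw [this, rel1]
  · show c ^ (2:ℤ) * (A * B) ^ (-(2*r)) * b ^ (-s) = 1
    rw [show (-(2*r)) = 2 * (-r) by ring, zpow_two_mul_eq hsq,
      show 2 * (-r) = -(2*r) by ring, rel2]
  · show c * (A * B) ^ (2*t) * b ^ u * c⁻¹ * (A * B) ^ (2*t) * b ^ u = 1
    rw [zpow_two_mul_eq hsq, rel3]

lemma gA'_cond : ∀ x ∈ sapphireRels r s t u, FreeGroup.lift (gA' (r := r) (s := s) (t := t) (u := u)) x = 1 := by
  intro x hx
  rcases memCases hx with rfl | rfl | rfl <;>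
    simp only [map_mul, map_inv, map_zpow, FreeGroup.lift_apply_of]
  · show (A * B⁻¹) * B * (A * B⁻¹)⁻¹ * B = 1
    have h2 : a⁻¹ * b⁻¹ * a * b⁻¹ = 1 := by
      have : a⁻¹ * b⁻¹ * a * b⁻¹ = a⁻¹ * (a * b * a⁻¹ * b)⁻¹ * a := by group
      rw [this, rel1]; group
    calc (A * B⁻¹) * B * (A * B⁻¹)⁻¹ * B
        = (a * (a⁻¹ * b⁻¹ * a * b⁻¹) * a⁻¹)⁻¹ := by group
      _ = 1 := by rw [h2]; group
  · show c ^ (2:ℤ) * (A * B⁻¹) ^ (-(2*r)) * b ^ (-s) = 1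
    rw [show (-(2*r)) = 2 * (-r) by ring, zpow_two_mul_eq hsq',
      show 2 * (-r) = -(2*r) by ring, rel2]
  · show c * (A * B⁻¹) ^ (2*t) * b ^ u * c⁻¹ * (A * B⁻¹) ^ (2*t) * b ^ u = 1
    rw [zpow_two_mul_eq hsq', rel3]

-- c² expressed
lemma hc2 : c ^ (2:ℤ) = b ^ s * a ^ (2*r) := by
  have h := rel2 (r := r) (s := s) (t := t) (u := u)
  calc c ^ (2:ℤ) = (c ^ (2:ℤ) * a ^ (-(2*r)) * b ^ (-s)) * b ^ s * a ^ (2*r) := by group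
    _ = b ^ s * a ^ (2*r) := by rw [h]; group

lemma commAB : Commute (a ^ (2*t) * b ^ u) (b ^ s * a ^ (2*r)) := by
  have h := hComm (r := r) (s := s) (t := t) (u := u)
  have hA : ∀ k : ℤ, a ^ (2*k) = (a * a) ^ k := fun k => by
    rw [zpow_mul, zpow_two]
  have c1 : Commute (a ^ (2*t)) (b ^ s) := by
    rw [hA]; exact ((h.symm.zpow_left t).zpow_right s)
  have c2 : Commute (a ^ (2*t)) (a ^ (2*r)) := (Commute.refl a).zpow_zpow _ _
  have c3 : Commute (b ^ u) (b ^ s) := (Commute.refl b).zpow_zpow _ _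
  have c4 : Commute (b ^ u) (a ^ (2*r)) := by
    rw [hA]; exact ((h.zpow_left u).zpow_right r)
  exact (c1.mul_left c3).mul_right (c2.mul_left c4)

lemma gC_cond : ∀ x ∈ sapphireRels r s t u, FreeGroup.lift (gC (r := r) (s := s) (t := t) (u := u)) x = 1 := by
  intro x hx
  rcases memCases hx with rfl | rfl | rfl <;>
    simp only [map_mul, map_inv, map_zpow, FreeGroup.lift_apply_of]
  · show a * b * a⁻¹ * b = 1
    exact rel1
  · show (C * (A ^ (2*t) * B ^ u)) ^ (2:ℤ) * a ^ (-(2*r)) * b ^ (-s) = 1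
    have key : (C * (A ^ (2*t) * B ^ u)) ^ (2:ℤ) = c ^ (2:ℤ) := by
      rw [zpow_two, zpow_two]
      calc (c * (a ^ (2*t) * b ^ u)) * (c * (a ^ (2*t) * b ^ u))
          = (c * (a ^ (2*t) * b ^ u)) * ((a ^ (2*t) * b ^ u)⁻¹ * c) := by rw [hcw]
        _ = c * c := by group
    rw [key, rel2]
  · show C * (A ^ (2*t) * B ^ u) * a ^ (2*t) * b ^ u *
      (C * (A ^ (2*t) * B ^ u))⁻¹ * a ^ (2*t) * b ^ u = 1
    have h3 := rel3 (r := r) (s := s) (t := t) (u := u)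
    calc C * (A ^ (2*t) * B ^ u) * a ^ (2*t) * b ^ u *
        (C * (A ^ (2*t) * B ^ u))⁻¹ * a ^ (2*t) * b ^ u
        = c * a ^ (2*t) * b ^ u * c⁻¹ * a ^ (2*t) * b ^ u := by group
      _ = 1 := h3

lemma gC'_cond : ∀ x ∈ sapphireRels r s t u, FreeGroup.lift (gC' (r := r) (s := s) (t := t) (u := u)) x = 1 := by
  intro x hx
  rcases memCases hx with rfl | rfl | rfl <;>
    simp only [map_mul, map_inv, map_zpow, FreeGroup.lift_apply_of]
  · show a * b * a⁻¹ * b = 1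
    exact rel1
  · show (C * (A ^ (2*t) * B ^ u)⁻¹) ^ (2:ℤ) * a ^ (-(2*r)) * b ^ (-s) = 1
    have key : (C * (A ^ (2*t) * B ^ u)⁻¹) ^ (2:ℤ) = c ^ (2:ℤ) := by
      rw [zpow_two]
      calc (c * (a ^ (2*t) * b ^ u)⁻¹) * (c * (a ^ (2*t) * b ^ u)⁻¹)
          = ((a ^ (2*t) * b ^ u) * c) * (c * (a ^ (2*t) * b ^ u)⁻¹) := by rw [hcw']
        _ = (a ^ (2*t) * b ^ u) * c ^ (2:ℤ) * (a ^ (2*t) * b ^ u)⁻¹ := by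
            rw [zpow_two]; group
        _ = (a ^ (2*t) * b ^ u) * (b ^ s * a ^ (2*r)) * (a ^ (2*t) * b ^ u)⁻¹ := by rw [hc2]
        _ = (b ^ s * a ^ (2*r)) * ((a ^ (2*t) * b ^ u) * (a ^ (2*t) * b ^ u)⁻¹) := by
            rw [commAB.eq]; group
        _ = b ^ s * a ^ (2*r) := by group
        _ = c ^ (2:ℤ) := (hc2).symm
    rw [key, rel2]
  · show C * (A ^ (2*t) * B ^ u)⁻¹ * a ^ (2*t) * b ^ u *
      (C * (A ^ (2*t) * B ^ u)⁻¹)⁻¹ * a ^ (2*t) * b ^ u = 1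
    have h3 := rel3 (r := r) (s := s) (t := t) (u := u)
    calc C * (A ^ (2*t) * B ^ u)⁻¹ * a ^ (2*t) * b ^ u *
        (C * (A ^ (2*t) * B ^ u)⁻¹)⁻¹ * a ^ (2*t) * b ^ u
        = c * a ^ (2*t) * b ^ u * c⁻¹ * a ^ (2*t) * b ^ u := by group
      _ = 1 := h3


def fA : SapphireGroup r s t u →* SapphireGroup r s t u := PresentedGroup.toGroup gA_cond
def fA' : SapphireGroup r s t u →* SapphireGroup r s t u := PresentedGroup.toGroup gA'_cond
def fC : SapphireGroup r s t u →* SapphireGroup r s t u := PresentedGroup.toGroup gC_cond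
def fC' : SapphireGroup r s t u →* SapphireGroup r s t u := PresentedGroup.toGroup gC'_cond

lemma fA_of (x : Fin 3) : fA (PresentedGroup.of x : SapphireGroup r s t u) = gA x :=
  PresentedGroup.toGroup.of _
lemma fA'_of (x : Fin 3) : fA' (PresentedGroup.of x : SapphireGroup r s t u) = gA' x :=
  PresentedGroup.toGroup.of _
lemma fC_of (x : Fin 3) : fC (PresentedGroup.of x : SapphireGroup r s t u) = gC x :=
  PresentedGroup.toGroup.of _
lemma fC'_of (x : Fin 3) : fC' (PresentedGroup.of x : SapphireGroup r s t u) = gC' x :=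
  PresentedGroup.toGroup.of _

def θA : SapphireGroup r s t u ≃* SapphireGroup r s t u :=
  MonoidHom.toMulEquiv fA fA'
    (by
      apply PresentedGroup.ext
      intro x
      fin_cases x <;>
        simp [fA_of, fA'_of, gA, gA', A, B, C, map_mul, map_inv])
    (by
      apply PresentedGroup.ext
      intro x
      fin_cases x <;>
        simp [fA_of, fA'_of, gA, gA', A, B, C, map_mul, map_inv])

def θC : SapphireGroup r s t u ≃* SapphireGroup r s t u :=
  MonoidHom.toMulEquiv fC fC'
    (by
      apply PresentedGroup.ext
      intro x
      fin_cases x <;>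
        (simp [fC_of, fC'_of, gC, gC', A, B, C, map_mul, map_inv, map_zpow]; try group))
    (by
      apply PresentedGroup.ext
      intro x
      fin_cases x <;>
        (simp [fC_of, fC'_of, gC, gC', A, B, C, map_mul, map_inv, map_zpow]; try group))

lemma θA_of (x : Fin 3) : θA (PresentedGroup.of x : SapphireGroup r s t u) = gA x :=
  fA_of x
lemma θC_of (x : Fin 3) : θC (PresentedGroup.of x : SapphireGroup r s t u) = gC x :=
  fC_of x


lemma comp_eq {G : Type*} [Group G] (ψ φ : SapphireGroup r s t u →* G)
    (θ : SapphireGroup r s t u ≃* SapphireGroup r s t u)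
    (hx : ∀ x, ψ (θ (PresentedGroup.of x)) = φ (PresentedGroup.of x)) :
    ψ.comp θ.toMonoidHom = φ :=
  PresentedGroup.ext fun x => hx x

end Sap

theorem stmt11 (r s t u : ℤ) (h : r * u - s * t = 1 ∨ r * u - s * t = -1) (hs : Even s)
    (φ₂ φ₄ φ₆ φ₇ : SapphireGroup r s t u →* Multiplicative (ZMod 2))
    (h₂ : φ₂ (PresentedGroup.of 0) = Multiplicative.ofAdd (0 : ZMod 2) ∧
          φ₂ (PresentedGroup.of 1) = Multiplicative.ofAdd (1 : ZMod 2) ∧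
          φ₂ (PresentedGroup.of 2) = Multiplicative.ofAdd (0 : ZMod 2))
    (h₄ : φ₄ (PresentedGroup.of 0) = Multiplicative.ofAdd (1 : ZMod 2) ∧
          φ₄ (PresentedGroup.of 1) = Multiplicative.ofAdd (1 : ZMod 2) ∧
          φ₄ (PresentedGroup.of 2) = Multiplicative.ofAdd (0 : ZMod 2))
    (h₆ : φ₆ (PresentedGroup.of 0) = Multiplicative.ofAdd (0 : ZMod 2) ∧
          φ₆ (PresentedGroup.of 1) = Multiplicative.ofAdd (1 : ZMod 2) ∧
          φ₆ (PresentedGroup.of 2) = Multiplicative.ofAdd (1 : ZMod 2))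
    (h₇ : φ₇ (PresentedGroup.of 0) = Multiplicative.ofAdd (1 : ZMod 2) ∧
          φ₇ (PresentedGroup.of 1) = Multiplicative.ofAdd (1 : ZMod 2) ∧
          φ₇ (PresentedGroup.of 2) = Multiplicative.ofAdd (1 : ZMod 2)) :
    ∀ φ ∈ ({φ₂, φ₄, φ₆, φ₇} : Set (SapphireGroup r s t u →* Multiplicative (ZMod 2))),
      ∀ ψ ∈ ({φ₂, φ₄, φ₆, φ₇} : Set (SapphireGroup r s t u →* Multiplicative (ZMod 2))),
        ∃ θ : SapphireGroup r s t u ≃* SapphireGroup r s t u,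
          ψ.comp θ.toMonoidHom = φ := by
  obtain ⟨h2a, h2b, h2c⟩ := h₂
  obtain ⟨h4a, h4b, h4c⟩ := h₄
  obtain ⟨h6a, h6b, h6c⟩ := h₆
  obtain ⟨h7a, h7b, h7c⟩ := h₇
  have hu : Odd u := by
    have hst : Even (s * t) := hs.mul_right t
    have hru : Odd (r * u) := by
      rcases h with h | h
      · have hh : r * u = s * t + 1 := by linarith
        rw [hh]; exact hst.add_one
      · have hh : r * u = s * t - 1 := by linarith
        rw [hh]; exact hst.sub_odd odd_one
    exact (Int.odd_mul.mp hru).2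
  have sq1 : ∀ x : Multiplicative (ZMod 2), x * x = 1 := by decide
  have zp2 : ∀ (x : Multiplicative (ZMod 2)) (k : ℤ), x ^ (2 * k) = 1 := fun x k => by
    rw [zpow_mul, zpow_two, sq1, one_zpow]
  have zpu : ∀ x : Multiplicative (ZMod 2), x ^ u = x := by
    obtain ⟨k, hk⟩ := hu
    intro x
    rw [hk, zpow_add, zpow_one, mul_comm (2 : ℤ) k] at *
    rw [show k * 2 = 2 * k by ring, zp2, one_mul]
  intro φ hφ ψ hψ
  simp only [Set.mem_insert_iff, Set.mem_singleton_iff] at hφ hψ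
  rcases hφ with rfl | rfl | rfl | rfl <;> rcases hψ with rfl | rfl | rfl | rfl <;>
    first
    | (refine ⟨MulEquiv.refl _, Sap.comp_eq _ _ _ fun x => ?_⟩
       rfl)
    | (refine ⟨Sap.θA, Sap.comp_eq _ _ _ fun x => ?_⟩
       fin_cases x <;>
         simp [Sap.θA_of, Sap.gA, Sap.A, Sap.B, Sap.C, map_mul, map_zpow,
           h2a, h2b, h2c, h4a, h4b, h4c, h6a, h6b, h6c, h7a, h7b, h7c, zp2, zpu] <;>
         decide)
    | (refine ⟨Sap.θC, Sap.comp_eq _ _ _ fun x => ?_⟩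
       fin_cases x <;>
         simp [Sap.θC_of, Sap.gC, Sap.A, Sap.B, Sap.C, map_mul, map_zpow,
           h2a, h2b, h2c, h4a, h4b, h4c, h6a, h6b, h6c, h7a, h7b, h7c, zp2, zpu] <;>
         decide)
    | (refine ⟨Sap.θA.trans Sap.θC, Sap.comp_eq _ _ _ fun x => ?_⟩
       fin_cases x <;>
         simp [MulEquiv.trans_apply, Sap.θA_of, Sap.θC_of, Sap.gA, Sap.gC,
           Sap.A, Sap.B, Sap.C, map_mul, map_zpow,
           h2a, h2b, h2c, h4a, h4b, h4c, h6a, h6b, h6c, h7a, h7b, h7c, zp2, zpu] <;>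
         decide)
end

section
/- Let a, β, γ be positive integers with a odd and a² − 4βγ = 1. Then the set of quadruples (r,s,t,u) of positive integers satisfying r·u + s·t = a, r·s = β and t·u = γ has exactly two elements; these two solutions are exchanged by the involution (r,s,t,u) ↦ (s,r,u,t), and for each solution the unordered pair {s·t, r·u} equals {(a+1)/2, (a−1)/2}. -/
private lemma key14 (m x y : ℕ) (hs : x + y = 2 * m + 1) (hp : x * y = m * (m + 1)) :
    (x = m + 1 ∧ y = m) ∨ (x = m ∧ y = m + 1) := by
  have h0 : ((x : ℤ) - (m + 1)) * ((x : ℤ) - m) = 0 := by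
    have hs' : (x : ℤ) + y = 2 * m + 1 := by exact_mod_cast hs
    have hp' : (x : ℤ) * y = m * (m + 1) := by exact_mod_cast hp
    linear_combination (x : ℤ) * hs' - hp'
  rcases mul_eq_zero.mp h0 with h1 | h1
  · have : (x : ℤ) = m + 1 := by linarith
    have hx : x = m + 1 := by exact_mod_cast this
    left; exact ⟨hx, by omega⟩
  · have : (x : ℤ) = m := by linarith
    have hx : x = m := by exact_mod_cast this
    right; exact ⟨hx, by omega⟩

private lemma div14 (r' s' r s : ℕ) (hr : 0 < r') (hs : 0 < s')
    (h1 : r' ∣ r) (h2 : s' ∣ s) (h3 : r' * s' = r * s) : r' = r ∧ s' = s := by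
  obtain ⟨k, hk⟩ := h1
  obtain ⟨l, hl⟩ := h2
  subst hk hl
  have h4 : r' * s' * (k * l) = r' * s' * 1 := by
    rw [mul_one]
    calc r' * s' * (k * l) = r' * k * (s' * l) := by ring
    _ = r' * s' := h3.symm
  have hkl : k * l = 1 := Nat.eq_of_mul_eq_mul_left (Nat.mul_pos hr hs) h4
  have hk1 : k = 1 := Nat.eq_one_of_mul_eq_one_left (by rwa [mul_comm] at hkl)
  have hl1 : l = 1 := Nat.eq_one_of_mul_eq_one_left hkl
  subst hk1 hl1; simp

theorem stmt14 (a β γ : ℕ) (ha : 0 < a) (hβ : 0 < β) (hγ : 0 < γ)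
    (hodd : Odd a) (h : a ^ 2 = 4 * β * γ + 1) :
    let Sol : Set (ℕ × ℕ × ℕ × ℕ) :=
      {q | (0 < q.1 ∧ 0 < q.2.1 ∧ 0 < q.2.2.1 ∧ 0 < q.2.2.2) ∧
        q.1 * q.2.2.2 + q.2.1 * q.2.2.1 = a ∧ q.1 * q.2.1 = β ∧ q.2.2.1 * q.2.2.2 = γ}
    Sol.ncard = 2 ∧
    (∀ q ∈ Sol, (q.2.1, q.1, q.2.2.2, q.2.2.1) ∈ Sol ∧ (q.2.1, q.1, q.2.2.2, q.2.2.1) ≠ q) ∧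
    (∀ q ∈ Sol,
      ({q.2.1 * q.2.2.1, q.1 * q.2.2.2} : Set ℕ) = {(a + 1) / 2, (a - 1) / 2}) := by
  intro Sol
  have hmem : ∀ q : ℕ × ℕ × ℕ × ℕ, q ∈ Sol ↔
      ((0 < q.1 ∧ 0 < q.2.1 ∧ 0 < q.2.2.1 ∧ 0 < q.2.2.2) ∧
        q.1 * q.2.2.2 + q.2.1 * q.2.2.1 = a ∧ q.1 * q.2.1 = β ∧ q.2.2.1 * q.2.2.2 = γ) :=
    fun q => Iff.rfl
  obtain ⟨m, hm⟩ := hodd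
  have hm' : a = 2 * m + 1 := by omega
  subst hm'
  have hβγ : β * γ = m * (m + 1) := by nlinarith
  have hm0 : 0 < m := by nlinarith
  set r := Nat.gcd β (m + 1) with hrdef
  set s := Nat.gcd β m with hsdef
  have hcop : Nat.Coprime (m + 1) m := by simp
  have hβdvd : β ∣ (m + 1) * m := ⟨γ, by rw [mul_comm (m+1) m, hβγ]⟩
  have hrs : r * s = β := (Nat.gcd_mul_gcd_eq_iff_dvd_mul_of_coprime hcop).mpr hβdvd
  have hr0 : 0 < r := Nat.gcd_pos_of_pos_left _ hβ
  have hs0 : 0 < s := Nat.gcd_pos_of_pos_left _ hβ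
  obtain ⟨u, hu⟩ : r ∣ m + 1 := Nat.gcd_dvd_right _ _
  obtain ⟨t, ht⟩ : s ∣ m := Nat.gcd_dvd_right _ _
  have hu0 : 0 < u := by
    rcases Nat.eq_zero_or_pos u with h0 | h0
    · rw [h0, mul_zero] at hu; omega
    · exact h0
  have ht0 : 0 < t := by
    rcases Nat.eq_zero_or_pos t with h0 | h0
    · rw [h0, mul_zero] at ht; omega
    · exact h0
  have hγ' : t * u = γ := by
    have h5 : β * γ = β * (t * u) := by
      calc β * γ = m * (m + 1) := hβγ
      _ = s * t * (r * u) := by rw [← ht, ← hu]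
      _ = r * s * (t * u) := by ring
      _ = β * (t * u) := by rw [hrs]
    exact (Nat.eq_of_mul_eq_mul_left hβ h5).symm
  have hP : (r, s, t, u) ∈ Sol := by
    rw [hmem]
    refine ⟨⟨hr0, hs0, ht0, hu0⟩, ?_, hrs, hγ'⟩
    simp only
    rw [← hu, ← ht]; ring
  have hQ : (s, r, u, t) ∈ Sol := by
    rw [hmem]
    refine ⟨⟨hs0, hr0, hu0, ht0⟩, ?_, by rw [mul_comm]; exact hrs, by rw [mul_comm]; exact hγ'⟩
    simp only
    rw [← hu, ← ht]; ring
  have hclass : ∀ q ∈ Sol, q = (r, s, t, u) ∨ q = (s, r, u, t) := by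
    rintro ⟨r', s', t', u'⟩ hq
    rw [hmem] at hq
    obtain ⟨⟨hr', hs', ht', hu'⟩, hsum, hβ', hγ''⟩ := hq
    simp only at hr' hs' ht' hu' hsum hβ' hγ''
    have hxy : (r' * u') * (s' * t') = m * (m + 1) := by
      rw [← hβγ, ← hβ', ← hγ'']; ring
    rcases key14 m (r' * u') (s' * t') hsum hxy with ⟨hx, hy⟩ | ⟨hx, hy⟩
    · have hd1 : r' ∣ r := Nat.dvd_gcd ⟨s', hβ'.symm⟩ ⟨u', hx.symm⟩
      have hd2 : s' ∣ s := Nat.dvd_gcd ⟨r', by rw [← hβ']; ring⟩ ⟨t', hy.symm⟩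
      obtain ⟨e1, e2⟩ := div14 r' s' r s hr' hs' hd1 hd2 (by rw [hβ', hrs])
      subst e1; subst e2
      have e4 : u' = u := Nat.eq_of_mul_eq_mul_left hr0 (hx.trans hu)
      have e3 : t' = t := Nat.eq_of_mul_eq_mul_left hs0 (hy.trans ht)
      left; rw [e3, e4]
    · have hd1 : s' ∣ r := Nat.dvd_gcd ⟨r', by rw [← hβ']; ring⟩ ⟨t', hy.symm⟩
      have hd2 : r' ∣ s := Nat.dvd_gcd ⟨s', hβ'.symm⟩ ⟨u', hx.symm⟩
      obtain ⟨e1, e2⟩ := div14 s' r' r s hs' hr' hd1 hd2 (by rw [mul_comm s' r', hβ', hrs])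
      subst e1; subst e2
      have e4 : u' = t := Nat.eq_of_mul_eq_mul_left hs0 (hx.trans ht)
      have e3 : t' = u := Nat.eq_of_mul_eq_mul_left hr0 (hy.trans hu)
      right; rw [e3, e4]
  have hne : ((r, s, t, u) : ℕ × ℕ × ℕ × ℕ) ≠ (s, r, u, t) := by
    intro heq
    simp only [Prod.mk.injEq] at heq
    obtain ⟨e1, e2, e3, e4⟩ := heq
    have : m + 1 = m := by rw [hu, ht, e1, e3]
    omega
  have hSol : Sol = {(r, s, t, u), (s, r, u, t)} := by
    apply Set.Subset.antisymm
    · intro q hq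
      rcases hclass q hq with rfl | rfl
      · exact Set.mem_insert _ _
      · exact Set.mem_insert_of_mem _ rfl
    · rintro q hq
      rcases hq with rfl | rfl
      · exact hP
      · exact hQ
  refine ⟨by rw [hSol]; exact Set.ncard_pair hne, ?_, ?_⟩
  · intro q hq
    rw [hmem] at hq
    obtain ⟨⟨p1, p2, p3, p4⟩, e1, e2, e3⟩ := hq
    constructor
    · rw [hmem]
      exact ⟨⟨p2, p1, p4, p3⟩, by simp only; linarith, by simp only; rw [mul_comm]; exact e2,
        by simp only; rw [mul_comm]; exact e3⟩
    · intro heq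
      have h1 : q.2.1 = q.1 := congrArg Prod.fst heq
      have h4 : q.2.2.1 = q.2.2.2 := (congrArg (fun p => p.2.2.2) heq)
      rw [h1, ← h4] at e1
      have e1' : 2 * (q.1 * q.2.2.1) = 2 * m + 1 := by linarith
      generalize q.1 * q.2.2.1 = x at e1'
      omega
  · intro q hq
    have d1 : (2 * m + 1 + 1) / 2 = m + 1 := by omega
    have d2 : (2 * m + 1 - 1) / 2 = m := by omega
    rw [d1, d2]
    rcases hclass q hq with rfl | rfl
    · simp only
      rw [show s * t = m from ht.symm, show r * u = m + 1 from hu.symm]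
      exact Set.pair_comm m (m + 1)
    · simp only
      rw [show r * u = m + 1 from hu.symm, show s * t = m from ht.symm]
end

section
/- Let a, β, γ be positive integers with a odd and a² − 4βγ = 1. Then the set of quadruples (r,s,t,u) of positive integers satisfying r·u + s·t = a, s·u = β and r·t = γ has exactly two elements. Moreover, (r,s,t,u) is a solution of this system if and only if (u,s,t,r) is a solution of the system r·u + s·t = a, r·s = β, t·u = γ. -/
lemma key' (x y z w : ℕ) (hco : Nat.Coprime z w) (hxy : x * y = z * w) :
    Nat.gcd x z * Nat.gcd x w = x := by
  have hD : Nat.gcd (Nat.gcd x z) (Nat.gcd w y) = 1 := by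
    have d1 : Nat.gcd (Nat.gcd x z) (Nat.gcd w y) ∣ z :=
      (Nat.gcd_dvd_left _ _).trans (Nat.gcd_dvd_right x z)
    have d2 : Nat.gcd (Nat.gcd x z) (Nat.gcd w y) ∣ w :=
      (Nat.gcd_dvd_right _ _).trans (Nat.gcd_dvd_left w y)
    exact Nat.eq_one_of_dvd_one (hco ▸ Nat.dvd_gcd d1 d2)
  calc Nat.gcd x z * Nat.gcd x w
      = Nat.gcd (Nat.gcd x z * x) (Nat.gcd x z * w) := (Nat.gcd_mul_left _ x w).symm
    _ = Nat.gcd (x * Nat.gcd x z) (Nat.gcd (x*w) (z*w)) := by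
        rw [Nat.gcd_mul_right, mul_comm]
    _ = Nat.gcd (x * Nat.gcd x z) (Nat.gcd (x*w) (x*y)) := by rw [hxy]
    _ = Nat.gcd (x * Nat.gcd x z) (x * Nat.gcd w y) := by rw [Nat.gcd_mul_left]
    _ = x * Nat.gcd (Nat.gcd x z) (Nat.gcd w y) := Nat.gcd_mul_left _ _ _
    _ = x := by rw [hD, mul_one]

lemma key2_s15 (x y z w : ℕ) (hco : Nat.Coprime x y) (hxy : x * y = z * w) :
    Nat.gcd x z * Nat.gcd x w = x := by
  have hD : Nat.gcd (Nat.gcd x z) (Nat.gcd w y) = 1 := by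
    have d1 : Nat.gcd (Nat.gcd x z) (Nat.gcd w y) ∣ x :=
      (Nat.gcd_dvd_left _ _).trans (Nat.gcd_dvd_left x z)
    have d2 : Nat.gcd (Nat.gcd x z) (Nat.gcd w y) ∣ y :=
      (Nat.gcd_dvd_right _ _).trans (Nat.gcd_dvd_right w y)
    exact Nat.eq_one_of_dvd_one (hco ▸ Nat.dvd_gcd d1 d2)
  calc Nat.gcd x z * Nat.gcd x w
      = Nat.gcd (Nat.gcd x z * x) (Nat.gcd x z * w) := (Nat.gcd_mul_left _ x w).symm
    _ = Nat.gcd (x * Nat.gcd x z) (Nat.gcd (x*w) (z*w)) := by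
        rw [Nat.gcd_mul_right, mul_comm]
    _ = Nat.gcd (x * Nat.gcd x z) (Nat.gcd (x*w) (x*y)) := by rw [hxy]
    _ = Nat.gcd (x * Nat.gcd x z) (x * Nat.gcd w y) := by rw [Nat.gcd_mul_left]
    _ = x * Nat.gcd (Nat.gcd x z) (Nat.gcd w y) := Nat.gcd_mul_left _ _ _
    _ = x := by rw [hD, mul_one]

theorem stmt15 (a β γ : ℕ) (ha : 0 < a) (hβ : 0 < β) (hγ : 0 < γ)
    (hodd : Odd a) (h : a ^ 2 = 4 * β * γ + 1) :
    let Sol₃ : Set (ℕ × ℕ × ℕ × ℕ) :=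
      {q | (0 < q.1 ∧ 0 < q.2.1 ∧ 0 < q.2.2.1 ∧ 0 < q.2.2.2) ∧
        q.1 * q.2.2.2 + q.2.1 * q.2.2.1 = a ∧ q.2.1 * q.2.2.2 = β ∧ q.1 * q.2.2.1 = γ}
    let Sol₁ : Set (ℕ × ℕ × ℕ × ℕ) :=
      {q | (0 < q.1 ∧ 0 < q.2.1 ∧ 0 < q.2.2.1 ∧ 0 < q.2.2.2) ∧
        q.1 * q.2.2.2 + q.2.1 * q.2.2.1 = a ∧ q.1 * q.2.1 = β ∧ q.2.2.1 * q.2.2.2 = γ}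
    Sol₃.ncard = 2 ∧
    (∀ r s t u : ℕ, (r, s, t, u) ∈ Sol₃ ↔ (u, s, t, r) ∈ Sol₁) := by
  intro Sol₃ Sol₁
  obtain ⟨k, hk⟩ := hodd
  have ha2 : a = 2 * k + 1 := by omega
  have hbg : β * γ = k * (k + 1) := by
    have e1 : 4 * (β * γ) + 1 = 4 * (k * (k + 1)) + 1 := by
      calc 4 * (β * γ) + 1 = 4 * β * γ + 1 := by ring
        _ = a ^ 2 := h.symm
        _ = 4 * (k * (k + 1)) + 1 := by rw [ha2]; ring
    omega
  have hk1 : 1 ≤ k := by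
    rcases Nat.eq_zero_or_pos k with h0 | h1
    · exfalso
      rw [h0] at hbg
      simp at hbg
      rcases hbg with h0' | h0' <;> omega
    · exact h1
  have co : Nat.Coprime (k + 1) k := by simp [Nat.coprime_add_self_left]
  -- the four factorizations
  have hmprod : Nat.gcd (k+1) γ * Nat.gcd (k+1) β = k + 1 :=
    key2_s15 (k+1) k γ β co (by rw [mul_comm γ β, hbg, mul_comm])
  have hnprod : Nat.gcd k γ * Nat.gcd k β = k :=
    key2_s15 k (k+1) γ β co.symm (by rw [mul_comm γ β, hbg])
  have hbprod : Nat.gcd β (k+1) * Nat.gcd β k = β :=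
    key' β γ (k+1) k co (by rw [hbg, mul_comm])
  have hgprod : Nat.gcd γ (k+1) * Nat.gcd γ k = γ :=
    key' γ β (k+1) k co (by rw [mul_comm γ β, hbg, mul_comm])
  have e_ru1 : Nat.gcd γ (k+1) * Nat.gcd β (k+1) = k + 1 := by
    rw [Nat.gcd_comm γ, Nat.gcd_comm β]; exact hmprod
  have e_st1 : Nat.gcd β k * Nat.gcd γ k = k := by
    rw [Nat.gcd_comm β, Nat.gcd_comm γ, mul_comm]; exact hnprod
  have e_su1 : Nat.gcd β k * Nat.gcd β (k+1) = β := by rw [mul_comm]; exact hbprod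
  set q₁ : ℕ × ℕ × ℕ × ℕ := (Nat.gcd γ (k+1), Nat.gcd β k, Nat.gcd γ k, Nat.gcd β (k+1)) with hq₁
  set q₂ : ℕ × ℕ × ℕ × ℕ := (Nat.gcd γ k, Nat.gcd β (k+1), Nat.gcd γ (k+1), Nat.gcd β k) with hq₂
  have hset : Sol₃ = {q₁, q₂} := by
    ext q
    obtain ⟨r, s, t, u⟩ := q
    constructor
    · rintro ⟨⟨p1, p2, p3, p4⟩, h5, h6, h7⟩
      -- derive r*u = k+1 ∧ s*t = k, or r*u = k ∧ s*t = k+1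
      have hxy : r * u * (s * t) = k * (k + 1) := by
        rw [show r * u * (s * t) = s * u * (r * t) by ring, h6, h7, hbg]
      have h1 : (r : ℤ) * u + (s : ℤ) * t = 2 * k + 1 := by
        have := h5; push_cast [ha2] at this ⊢; linarith
      have h2 : (r : ℤ) * u * ((s : ℤ) * t) = k * (k + 1) := by exact_mod_cast hxy
      have hZ : ((r : ℤ) * u - k) * ((r : ℤ) * u - (k + 1)) = 0 := by
        linear_combination ((r : ℤ) * u) * h1 - h2
      have hcase : r * u = k + 1 ∧ s * t = k ∨ r * u = k ∧ s * t = k + 1 := by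
        rcases mul_eq_zero.mp hZ with hc | hc
        · right
          have hru : r * u = k := by
            have : (r : ℤ) * u = k := by linarith
            exact_mod_cast this
          exact ⟨hru, by omega⟩
        · left
          have hru : r * u = k + 1 := by
            have : (r : ℤ) * u = k + 1 := by linarith
            exact_mod_cast this
          exact ⟨hru, by omega⟩
      rcases hcase with ⟨hru, hst⟩ | ⟨hru, hst⟩
      · -- q = q₁
        have hu : u ∣ k + 1 := ⟨r, by rw [← hru, mul_comm]⟩
        have ht : t ∣ k := ⟨s, by rw [← hst, mul_comm]⟩
        have hr : r ∣ k + 1 := ⟨u, hru.symm⟩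
        have hs : s ∣ k := ⟨t, hst.symm⟩
        have hut : Nat.Coprime u t := (Nat.Coprime.coprime_dvd_left hu co).coprime_dvd_right ht
        have hrs : Nat.Coprime r s := (Nat.Coprime.coprime_dvd_left hr co).coprime_dvd_right hs
        have er : Nat.gcd γ (k+1) = r := by
          rw [← h7, ← hru, Nat.gcd_mul_left, hut.symm.gcd_eq_one, mul_one]
        have es : Nat.gcd β k = s := by
          rw [← h6, ← hst, Nat.gcd_mul_left, hut.gcd_eq_one, mul_one]
        have et : Nat.gcd γ k = t := by
          rw [← h7, ← hst, Nat.gcd_mul_right, hrs.gcd_eq_one, one_mul]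
        have eu : Nat.gcd β (k+1) = u := by
          rw [← h6, ← hru, Nat.gcd_mul_right, hrs.symm.gcd_eq_one, one_mul]
        simp only [Set.mem_insert_iff, Set.mem_singleton_iff, hq₁, hq₂, Prod.mk.injEq]
        exact Or.inl ⟨er.symm, es.symm, et.symm, eu.symm⟩
      · -- q = q₂
        have hu : u ∣ k := ⟨r, by rw [← hru, mul_comm]⟩
        have ht : t ∣ k + 1 := ⟨s, by rw [← hst, mul_comm]⟩
        have hr : r ∣ k := ⟨u, hru.symm⟩
        have hs : s ∣ k + 1 := ⟨t, hst.symm⟩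
        have hut : Nat.Coprime u t := (Nat.Coprime.coprime_dvd_left hu co.symm).coprime_dvd_right ht
        have hrs : Nat.Coprime r s := (Nat.Coprime.coprime_dvd_left hr co.symm).coprime_dvd_right hs
        have er : Nat.gcd γ k = r := by
          rw [← h7, ← hru, Nat.gcd_mul_left, hut.symm.gcd_eq_one, mul_one]
        have es : Nat.gcd β (k+1) = s := by
          rw [← h6, ← hst, Nat.gcd_mul_left, hut.gcd_eq_one, mul_one]
        have et : Nat.gcd γ (k+1) = t := by
          rw [← h7, ← hst, Nat.gcd_mul_right, hrs.gcd_eq_one, one_mul]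
        have eu : Nat.gcd β k = u := by
          rw [← h6, ← hru, Nat.gcd_mul_right, hrs.symm.gcd_eq_one, one_mul]
        simp only [Set.mem_insert_iff, Set.mem_singleton_iff, hq₁, hq₂, Prod.mk.injEq]
        exact Or.inr ⟨er.symm, es.symm, et.symm, eu.symm⟩
    · intro hq
      have g1 : 0 < Nat.gcd γ (k+1) := Nat.gcd_pos_of_pos_left _ hγ
      have g2 : 0 < Nat.gcd γ k := Nat.gcd_pos_of_pos_left _ hγ
      have g3 : 0 < Nat.gcd β (k+1) := Nat.gcd_pos_of_pos_left _ hβ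
      have g4 : 0 < Nat.gcd β k := Nat.gcd_pos_of_pos_left _ hβ
      rcases hq with hq | hq <;> rw [hq]
      · exact ⟨⟨g1, g4, g2, g3⟩, by rw [e_ru1, e_st1]; omega, e_su1,
          hgprod⟩
      · refine ⟨⟨g2, g3, g1, g4⟩, ?_, ?_, ?_⟩
        · have e1 : Nat.gcd γ k * Nat.gcd β k = k := by
            rw [Nat.gcd_comm γ, Nat.gcd_comm β]; exact hnprod
          have e2 : Nat.gcd β (k+1) * Nat.gcd γ (k+1) = k + 1 := by
            rw [mul_comm]; exact e_ru1
          rw [e1, e2]; omega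
        · exact hbprod
        · rw [mul_comm]; exact hgprod
  have hne : q₁ ≠ q₂ := by
    intro he
    rw [hq₁, hq₂, Prod.mk.injEq, Prod.mk.injEq, Prod.mk.injEq] at he
    obtain ⟨he1, he2, he3, he4⟩ := he
    have e2 : Nat.gcd γ k * Nat.gcd β k = k := by
      rw [Nat.gcd_comm γ, Nat.gcd_comm β]; exact hnprod
    have : k + 1 = k := by rw [← e_ru1, he1, he4, e2]
    omega
  constructor
  · rw [hset]
    exact Set.ncard_pair hne
  · intro r s t u
    constructor
    · rintro ⟨⟨p1, p2, p3, p4⟩, h5, h6, h7⟩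
      exact ⟨⟨p4, p2, p3, p1⟩, by rw [mul_comm u r]; exact h5,
        by rw [mul_comm u s]; exact h6, by rw [mul_comm t r]; exact h7⟩
    · rintro ⟨⟨p1, p2, p3, p4⟩, h5, h6, h7⟩
      exact ⟨⟨p4, p2, p3, p1⟩, by rw [mul_comm r u]; exact h5,
        by rw [mul_comm s u]; exact h6, by rw [mul_comm r t]; exact h7⟩
end

section
/- Let r,s,t,u be positive integers with ru−st = ±1 and r ≠ u, and set M₁ = [[ru+st, 2rs],[2tu, ru+st]] and M₃ = [[ru+st, 2su],[2rt, ru+st]] (both lie in GL(2,ℤ) since their determinants equal (ru−st)² = 1). Then M₃ is not equal to any matrix of the form ε·B^i·M₁^δ·B^j with ε ∈ {1,−1}, i,j ∈ {0,1}, δ ∈ {1,−1} and B = [[1,0],[0,−1]]. Consequently, by Morimoto's classification, the two double coverings of the sapphire S_{[[r,s],[t,u]]} corresponding to the epimorphisms φ₁ and φ₃ are non-homeomorphic sapphires. -/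
theorem stmt17 (r s t u : ℤ) (hr : 0 < r) (hs : 0 < s) (ht : 0 < t) (hu : 0 < u)
    (h : r * u - s * t = 1 ∨ r * u - s * t = -1) (hru : r ≠ u)
    (M₁ M₃ B : Matrix (Fin 2) (Fin 2) ℤ)
    (hM₁ : M₁ = !![r * u + s * t, 2 * r * s; 2 * t * u, r * u + s * t])
    (hM₃ : M₃ = !![r * u + s * t, 2 * s * u; 2 * r * t, r * u + s * t])
    (hB : B = !![1, 0; 0, -1]) :
    ∀ ε δ : ℤ, (ε = 1 ∨ ε = -1) → (δ = 1 ∨ δ = -1) →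
      ∀ i j : ℕ, i ≤ 1 → j ≤ 1 →
        M₃ ≠ ε • (B ^ i * M₁ ^ δ * B ^ j) := by
  have hdet : M₁.det = 1 := by
    subst hM₁
    rw [Matrix.det_fin_two_of]
    rcases h with h | h <;> nlinarith
  have hinv : M₁⁻¹ = !![r * u + s * t, -(2 * r * s); -(2 * t * u), r * u + s * t] := by
    rw [Matrix.inv_def, hdet, hM₁, Matrix.adjugate_fin_two]
    simp
  intro ε δ hε hδ i j hi hj heq
  have key : 2 * s * u = 2 * r * s ∨ 2 * s * u = -(2 * r * s) := by
    interval_cases i <;> interval_cases j <;>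
      rcases hδ with rfl | rfl <;> rcases hε with rfl | rfl <;>
        rw [hM₃, hB] at heq <;>
        simp only [zpow_one, Matrix.zpow_neg_one, hinv] at heq <;>
        simp only [hM₁, pow_zero, pow_one, Matrix.one_mul, Matrix.mul_one] at heq <;>
        have h01 := congrFun (congrFun heq 0) 1 <;>
        simp [Matrix.mul_apply, Fin.sum_univ_two, Matrix.smul_apply] at h01 <;>
        first
          | (left; linarith)
          | (right; linarith)
  rcases key with k | k
  · have : u = r := by
      have := mul_left_cancel₀ (by positivity : (2 * s : ℤ) ≠ 0) (by linarith : 2 * s * u = 2 * s * r)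
      linarith
    exact hru this.symm
  · nlinarith [mul_pos hs hu, mul_pos hr hs]
end
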